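/- arXiv:1510.05622 — 9 statements merged into one kernel-verified Lean document; each statement's English description precedes it below -/
import Mathlib

section
/- Let d ≥ 1 and let M be a real d×(d+1) matrix of rank d, with columns m_1, …, m_{d+1}. For i ∈ {1,…,d+1} let minor(M,i) denote the determinant of the d×d matrix obtained from M by deleting its i-th column. Then the following are equivalent: (1) M is oriented, i.e., all the values (−1)^i·minor(M,i), i = 1,…,d+1, are nonzero and have the same sign; (2) for every invertible d×d real matrix A, the matrix A·M is oriented; (3) for every (d+1)×(d+1) permutation matrix P, the matrix M·P is oriented; (4) every nonzero vector in the kernel of M has all of its coordinates nonzero and of the same sign; (5) there exists i ∈ {1,…,d+1} such that m_i = Σ_{j≠i} μ_j m_j for some coefficients μ_j that are all negative; (6) for every i ∈ {1,…,d+1}, m_i = Σ_{j≠i} μ_j m_j for some coefficients μ_j that are all negative. -/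
open Matrix

noncomputable section

/-- The determinant of the square matrix obtained from a `d × (d+1)` matrix `M`
by deleting its `i`-th column. -/
def colMinor {d : ℕ} (M : Matrix (Fin d) (Fin (d + 1)) ℝ) (i : Fin (d + 1)) : ℝ :=
  (M.submatrix id i.succAbove).det

/-- A `d × (d+1)` real matrix is *oriented* if all the values `(-1)^i * minor(M, i)`
are nonzero and have the same sign. -/
def IsOriented {d : ℕ} (M : Matrix (Fin d) (Fin (d + 1)) ℝ) : Prop :=
  (∀ i : Fin (d + 1), 0 < (-1 : ℝ) ^ (i : ℕ) * colMinor M i) ∨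
  (∀ i : Fin (d + 1), (-1 : ℝ) ^ (i : ℕ) * colMinor M i < 0)

/-! The signed minors `(-1)^i minor(M, i)` form a vector in the kernel of `M` (Laplace expansion of
`M` with one of its rows repeated on top). When `M` has rank `d` this vector is nonzero and the
kernel is the line it spans, so `M` is oriented iff the kernel line meets the open positive
orthant, iff some (every) column is a combination of the others with negative coefficients.
Multiplying by `A` scales every minor by `det A`, and permuting columns permutes the kernel. -/

def AllPosOrAllNeg {ι : Type*} (v : ι → ℝ) : Prop :=
  (∀ j, 0 < v j) ∨ (∀ j, v j < 0)

namespace AllPosOrAllNeg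

variable {ι : Type*} {v : ι → ℝ}

lemma apply_ne_zero (h : AllPosOrAllNeg v) (j : ι) : v j ≠ 0 :=
  h.elim (fun h => (h j).ne') (fun h => (h j).ne)

lemma smul (h : AllPosOrAllNeg v) {c : ℝ} (hc : c ≠ 0) : AllPosOrAllNeg (c • v) := by
  rcases hc.lt_or_gt with hc | hc <;> rcases h with h | h
  · exact .inr fun j => mul_neg_of_neg_of_pos hc (h j)
  · exact .inl fun j => mul_pos_of_neg_of_neg hc (h j)
  · exact .inl fun j => mul_pos hc (h j)
  · exact .inr fun j => mul_neg_of_pos_of_neg hc (h j)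

lemma comp (h : AllPosOrAllNeg v) {κ : Type*} (f : κ → ι) : AllPosOrAllNeg (v ∘ f) :=
  h.imp (fun h j => h (f j)) (fun h j => h (f j))

end AllPosOrAllNeg

namespace Matrix

section Kernel

variable {K m n : Type*} [Field K] [Fintype n] {M : Matrix m n K}

lemma finrank_ker_mulVecLin_eq_one (hrank : M.rank + 1 = Fintype.card n) :
    Module.finrank K (LinearMap.ker M.mulVecLin) = 1 := by
  have := LinearMap.finrank_range_add_finrank_ker M.mulVecLin
  rw [← Matrix.rank, Module.finrank_fintype_fun_eq_card] at this
  omega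

lemma exists_mulVec_eq_zero_ne_zero (hrank : M.rank + 1 = Fintype.card n) :
    ∃ v : n → K, M *ᵥ v = 0 ∧ v ≠ 0 := by
  have hker : LinearMap.ker M.mulVecLin ≠ ⊥ := fun h => by
    have := finrank_ker_mulVecLin_eq_one hrank
    rw [h, finrank_bot] at this
    exact zero_ne_one this
  exact Submodule.exists_mem_ne_zero_of_ne_bot hker

lemma exists_eq_smul_of_mulVec_eq_zero (hrank : M.rank + 1 = Fintype.card n) {u v : n → K}
    (hu : M *ᵥ u = 0) (hv : M *ᵥ v = 0) (hu0 : u ≠ 0) : ∃ c : K, v = c • u := by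
  have hu0' : (⟨u, hu⟩ : LinearMap.ker M.mulVecLin) ≠ 0 := by simpa [Subtype.ext_iff] using hu0
  obtain ⟨c, hc⟩ :=
    (finrank_eq_one_iff_of_nonzero' _ hu0').mp (finrank_ker_mulVecLin_eq_one hrank) ⟨v, hv⟩
  exact ⟨c, by simpa [Subtype.ext_iff, eq_comm] using hc⟩

lemma mulVec_surjective_of_rank_eq [Fintype m] (hrank : M.rank = Fintype.card m) :
    Function.Surjective M.mulVec := by
  have : LinearMap.range M.mulVecLin = ⊤ := by
    apply Submodule.eq_top_of_finrank_eq
    rw [← Matrix.rank, hrank, Module.finrank_fintype_fun_eq_card]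
  exact LinearMap.range_eq_top.mp this

end Kernel

section NegativeCombination

variable {m n : Type*} [Fintype n] [DecidableEq n] {M : Matrix m n ℝ}

lemma exists_pos_mulVec_eq_zero_of_col_eq_sum {i : n} {μ : n → ℝ} (hμ : ∀ j, j ≠ i → μ j < 0)
    (hrep : ∀ r, M r i = ∑ j ∈ Finset.univ.erase i, μ j * M r j) :
    ∃ v : n → ℝ, M *ᵥ v = 0 ∧ ∀ j, 0 < v j := by
  refine ⟨fun j => if j = i then 1 else -μ j, funext fun r => ?_, fun j => ?_⟩
  · rw [mulVec, dotProduct, ← Finset.add_sum_erase _ _ (Finset.mem_univ i), if_pos rfl,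
      mul_one, hrep r, ← Finset.sum_add_distrib]
    refine Finset.sum_eq_zero fun j hj => ?_
    rw [if_neg (Finset.ne_of_mem_erase hj)]
    ring
  · by_cases h : j = i
    · simp [h]
    · simpa [h] using hμ j h

lemma exists_neg_coeffs_of_mulVec_eq_zero {v : n → ℝ} (hv : M *ᵥ v = 0) (hvpos : ∀ j, 0 < v j)
    (i : n) : ∃ μ : n → ℝ, (∀ j, j ≠ i → μ j < 0) ∧
      ∀ r, M r i = ∑ j ∈ Finset.univ.erase i, μ j * M r j := by
  refine ⟨fun j => -(v j / v i), fun j _ => neg_neg_of_pos (div_pos (hvpos j) (hvpos i)),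
    fun r => ?_⟩
  have hrow : M r i * v i + ∑ j ∈ Finset.univ.erase i, M r j * v j = 0 := by
    rw [Finset.add_sum_erase _ (fun j => M r j * v j) (Finset.mem_univ i)]
    exact congr_fun hv r
  have hvi := (hvpos i).ne'
  simp only [neg_mul, div_mul_eq_mul_div, Finset.sum_neg_distrib, ← Finset.sum_div, mul_comm (v _)]
  field_simp
  linarith

end NegativeCombination

end Matrix

section Oriented

variable {d : ℕ} {M : Matrix (Fin d) (Fin (d + 1)) ℝ}

def cofactorVec (M : Matrix (Fin d) (Fin (d + 1)) ℝ) : Fin (d + 1) → ℝ :=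
  fun i => (-1 : ℝ) ^ (i : ℕ) * colMinor M i

lemma isOriented_iff_allPosOrAllNeg : IsOriented M ↔ AllPosOrAllNeg (cofactorVec M) := Iff.rfl

lemma mulVec_cofactorVec (M : Matrix (Fin d) (Fin (d + 1)) ℝ) : M *ᵥ cofactorVec M = 0 := by
  funext r
  set N : Matrix (Fin (d + 1)) (Fin (d + 1)) ℝ := Matrix.of (Fin.cons (M r) M)
  have hN : N.det = 0 :=
    det_zero_of_row_eq (M := N) (i := 0) (j := r.succ) (Fin.succ_ne_zero r).symm rfl
  rw [det_succ_row_zero] at hN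
  rw [mulVec, dotProduct, Pi.zero_apply, ← hN]
  refine Finset.sum_congr rfl fun j _ => ?_
  simp only [cofactorVec, colMinor]
  have hminor : N.submatrix Fin.succ j.succAbove = M.submatrix id j.succAbove := rfl
  have hrow : N 0 j = M r j := rfl
  rw [hminor, hrow]
  ring

lemma cofactorVec_mul (A : Matrix (Fin d) (Fin d) ℝ) :
    cofactorVec (A * M) = A.det • cofactorVec M := by
  funext i
  have : (A * M).submatrix id i.succAbove = A * M.submatrix id i.succAbove := by
    ext a b
    simp [mul_apply]
  simp only [cofactorVec, colMinor, this, det_mul, Pi.smul_apply, smul_eq_mul]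
  ring

lemma IsOriented.mul (h : IsOriented M) {A : Matrix (Fin d) (Fin d) ℝ} (hA : IsUnit A.det) :
    IsOriented (A * M) := by
  rw [isOriented_iff_allPosOrAllNeg, cofactorVec_mul]
  exact AllPosOrAllNeg.smul h hA.ne_zero

lemma colMinor_ne_zero_of_mulVec_eq_zero (hrank : M.rank = d) {v : Fin (d + 1) → ℝ}
    {i : Fin (d + 1)} (hv : M *ᵥ v = 0) (hvi : v i ≠ 0) : colMinor M i ≠ 0 := by
  suffices Function.Surjective (M.submatrix id i.succAbove).mulVec from
    ((isUnit_iff_isUnit_det _).mp (mulVec_surjective_iff_isUnit.mp this)).ne_zero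
  intro y
  obtain ⟨x, hx⟩ := mulVec_surjective_of_rank_eq (by simpa using hrank) y
  -- shift `x` along the kernel vector `v` to kill its `i`-th coordinate
  set x' := x - (x i / v i) • v
  have hx' : M *ᵥ x' = y := by simp [x', mulVec_sub, mulVec_smul, hx, hv]
  have hx'i : x' i = 0 := by simp [x', hvi]
  refine ⟨x' ∘ i.succAbove, funext fun r => ?_⟩
  have := congr_fun hx' r
  rwa [mulVec, dotProduct, Fin.sum_univ_succAbove _ i, hx'i, mul_zero, zero_add] at this

lemma cofactorVec_ne_zero (hrank : M.rank = d) : cofactorVec M ≠ 0 := by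
  obtain ⟨v, hv, hv0⟩ := exists_mulVec_eq_zero_ne_zero (M := M) (by simpa using hrank)
  obtain ⟨i, hvi⟩ := Function.ne_iff.mp hv0
  exact Function.ne_iff.mpr ⟨i, by
    simpa [cofactorVec] using colMinor_ne_zero_of_mulVec_eq_zero hrank hv hvi⟩

lemma allPosOrAllNeg_of_mulVec_eq_zero (hrank : M.rank = d) {w : Fin (d + 1) → ℝ}
    (hw : M *ᵥ w = 0) (hsign : AllPosOrAllNeg w) {v : Fin (d + 1) → ℝ} (hv : M *ᵥ v = 0)
    (hv0 : v ≠ 0) : AllPosOrAllNeg v := by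
  have hw0 : w ≠ 0 := fun h => hsign.apply_ne_zero 0 (congr_fun h 0)
  obtain ⟨c, rfl⟩ := exists_eq_smul_of_mulVec_eq_zero (by simpa using hrank) hw hv hw0
  exact hsign.smul (left_ne_zero_of_smul hv0)

lemma isOriented_iff_forall_mulVec_eq_zero (hrank : M.rank = d) :
    IsOriented M ↔ ∀ v, M *ᵥ v = 0 → v ≠ 0 → AllPosOrAllNeg v :=
  ⟨fun h _ => allPosOrAllNeg_of_mulVec_eq_zero hrank (mulVec_cofactorVec M) h,
    fun h => h _ (mulVec_cofactorVec M) (cofactorVec_ne_zero hrank)⟩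

lemma IsOriented.submatrix_perm (hrank : M.rank = d) (h : IsOriented M)
    (σ : Equiv.Perm (Fin (d + 1))) : IsOriented (M.submatrix id σ) := by
  have hrankσ : (M.submatrix id σ).rank = d :=
    (rank_submatrix M (Equiv.refl _) σ).trans hrank
  refine (isOriented_iff_forall_mulVec_eq_zero hrankσ).mpr fun v hv hv0 => ?_
  rw [submatrix_mulVec_equiv M v id σ] at hv
  have hv' : M *ᵥ (v ∘ σ.symm) = 0 := funext fun r => congr_fun hv r
  have hv0' : v ∘ σ.symm ≠ 0 := fun h0 => hv0 (funext fun j => by simpa using congr_fun h0 (σ j))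
  simpa [Function.comp_def] using
    ((isOriented_iff_forall_mulVec_eq_zero hrank).mp h _ hv' hv0').comp σ

end Oriented

theorem stmt0_general (d : ℕ) (M : Matrix (Fin d) (Fin (d + 1)) ℝ)
    (hrank : M.rank = d) :
    List.TFAE
      [ IsOriented M,
        ∀ A : Matrix (Fin d) (Fin d) ℝ, IsUnit A.det → IsOriented (A * M),
        ∀ σ : Equiv.Perm (Fin (d + 1)), IsOriented (M.submatrix id σ),
        ∀ v : Fin (d + 1) → ℝ, M.mulVec v = 0 → v ≠ 0 →
          ((∀ j, 0 < v j) ∨ (∀ j, v j < 0)),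
        ∃ i : Fin (d + 1), ∃ μ : Fin (d + 1) → ℝ, (∀ j, j ≠ i → μ j < 0) ∧
          ∀ r, M r i = ∑ j ∈ Finset.univ.erase i, μ j * M r j,
        ∀ i : Fin (d + 1), ∃ μ : Fin (d + 1) → ℝ, (∀ j, j ≠ i → μ j < 0) ∧
          ∀ r, M r i = ∑ j ∈ Finset.univ.erase i, μ j * M r j ] := by
  tfae_have 1 ↔ 4 := isOriented_iff_forall_mulVec_eq_zero hrank
  tfae_have 1 → 2 := fun h _ hA => h.mul hA
  tfae_have 2 → 1 := fun h => by simpa using h 1 (by simp)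
  tfae_have 1 → 3 := fun h σ => h.submatrix_perm hrank σ
  tfae_have 3 → 1 := fun h => by simpa using h 1
  tfae_have 4 → 6 := by
    intro h i
    obtain ⟨u, hu, hu0⟩ := exists_mulVec_eq_zero_ne_zero (M := M) (by simpa using hrank)
    rcases h u hu hu0 with hpos | hneg
    · exact exists_neg_coeffs_of_mulVec_eq_zero hu hpos i
    · exact exists_neg_coeffs_of_mulVec_eq_zero (v := -u) (by rw [mulVec_neg, hu, neg_zero])
        (fun j => neg_pos.mpr (hneg j)) i
  tfae_have 6 → 5 := fun h => ⟨0, h 0⟩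
  tfae_have 5 → 4 := by
    rintro ⟨i, μ, hμ, hrep⟩
    obtain ⟨v, hv, hvpos⟩ := exists_pos_mulVec_eq_zero_of_col_eq_sum hμ hrep
    exact fun _ => allPosOrAllNeg_of_mulVec_eq_zero hrank hv (.inl hvpos)
  tfae_finish

theorem stmt0 (d : ℕ) (hd : 1 ≤ d) (M : Matrix (Fin d) (Fin (d + 1)) ℝ)
    (hrank : M.rank = d) :
    List.TFAE
      [ IsOriented M,
        ∀ A : Matrix (Fin d) (Fin d) ℝ, IsUnit A.det → IsOriented (A * M),
        ∀ σ : Equiv.Perm (Fin (d + 1)), IsOriented (M.submatrix id σ),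
        ∀ v : Fin (d + 1) → ℝ, M.mulVec v = 0 → v ≠ 0 →
          ((∀ j, 0 < v j) ∨ (∀ j, v j < 0)),
        ∃ i : Fin (d + 1), ∃ μ : Fin (d + 1) → ℝ, (∀ j, j ≠ i → μ j < 0) ∧
          ∀ r, M r i = ∑ j ∈ Finset.univ.erase i, μ j * M r j,
        ∀ i : Fin (d + 1), ∃ μ : Fin (d + 1) → ℝ, (∀ j, j ≠ i → μ j < 0) ∧
          ∀ r, M r i = ∑ j ∈ Finset.univ.erase i, μ j * M r j ] :=
  stmt0_general d M hrank
end
end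

section
/- Let d ≥ 1 and let M be a real d×(d+1) matrix of rank d with columns v_1, …, v_{d+1} ∈ ℝ^d. Then M is oriented if and only if the intersection of the half-spaces H_i^+ = {x ∈ ℝ^d : ⟨v_i, x⟩ ≥ 0}, i = 1,…,d+1, is reduced to the zero vector. -/
open Matrix

noncomputable section

/-! The signed minors `c i = (-1)^i * colMinor M i` are the cofactors of the first row of the
bordered matrix `[y; M]`, so `det [y; M] = c ⬝ᵥ y`. As the rows of `M` are independent, `[y; M]`
is singular exactly when `y` lies in the row space of `M`; hence the row space is the hyperplane
`c ⬝ᵥ y = 0`. Since `x ↦ x ᵥ* M` is injective, the cone `{x | 0 ≤ x ᵥ* M}` is trivial iff this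
hyperplane meets the nonnegative orthant only at `0`, i.e. iff all `c i` are nonzero of one sign. -/

namespace Matrix

variable {d : ℕ}

def signedMinors (M : Matrix (Fin d) (Fin (d + 1)) ℝ) (i : Fin (d + 1)) : ℝ :=
  (-1) ^ (i : ℕ) * colMinor M i

lemma det_of_cons_eq_signedMinors_dotProduct (M : Matrix (Fin d) (Fin (d + 1)) ℝ)
    (y : Fin (d + 1) → ℝ) : (of (Fin.cons y M)).det = signedMinors M ⬝ᵥ y := by
  rw [det_succ_row_zero, dotProduct]
  refine Finset.sum_congr rfl fun j _ => ?_
  have hminor : (of (Fin.cons y M)).submatrix Fin.succ j.succAbove = M.submatrix id j.succAbove :=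
    rfl
  rw [hminor, signedMinors, colMinor]
  exact mul_right_comm _ (y j) _

lemma linearIndependent_row_of_rank_eq {K m n : Type*} [Field K] [Fintype m] [Fintype n]
    {M : Matrix m n K} (h : M.rank = Fintype.card m) : LinearIndependent K M.row := by
  rw [linearIndependent_iff_card_eq_finrank_span, Set.finrank, ← rank_eq_finrank_span_row, h]

lemma mem_range_vecMul_iff_signedMinors_dotProduct_eq_zero {M : Matrix (Fin d) (Fin (d + 1)) ℝ}
    (hM : LinearIndependent ℝ M.row) (y : Fin (d + 1) → ℝ) :
    y ∈ Set.range (fun x => x ᵥ* M) ↔ signedMinors M ⬝ᵥ y = 0 := by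
  rw [← det_of_cons_eq_signedMinors_dotProduct, ← not_ne_iff, ← isUnit_iff_ne_zero,
    ← isUnit_iff_isUnit_det, ← linearIndependent_rows_iff_isUnit]
  have hrow : (of (Fin.cons y M)).row = Fin.cons y M.row := rfl
  rw [hrow, linearIndependent_finCons, ← range_vecMulLinear]
  simp [hM]

lemma setOf_nonneg_vecMul_eq_singleton_zero_iff {m n : Type*} [Fintype m]
    {M : Matrix m n ℝ} (hM : LinearIndependent ℝ M.row) :
    {x | 0 ≤ x ᵥ* M} = {0} ↔ ∀ y, 0 ≤ y → y ∈ Set.range (fun x => x ᵥ* M) → y = 0 := by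
  constructor
  · rintro h _ hy ⟨x, rfl⟩
    have hx : x ∈ {x | 0 ≤ x ᵥ* M} := hy
    rw [h, Set.mem_singleton_iff] at hx
    exact hx ▸ zero_vecMul M
  · intro h
    ext x
    refine ⟨fun hx => vecMul_injective_iff.2 hM ?_, fun hx => ?_⟩
    · exact (h _ hx ⟨x, rfl⟩).trans (zero_vecMul M).symm
    · rw [Set.mem_singleton_iff.1 hx, Set.mem_ofPred_eq, zero_vecMul]

end Matrix

section

variable {ι : Type*} [Fintype ι] {c : ι → ℝ}

lemma eq_zero_of_nonneg_of_dotProduct_eq_zero {y : ι → ℝ} (hc : ∀ i, 0 < c i) (hy : 0 ≤ y)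
    (h : c ⬝ᵥ y = 0) : y = 0 := by
  have hterms := (Finset.sum_eq_zero_iff_of_nonneg fun i _ => mul_nonneg (hc i).le (hy i)).1 h
  funext i
  exact (mul_eq_zero.1 (hterms i (Finset.mem_univ i))).resolve_left (hc i).ne'

lemma pos_or_neg_of_forall_nonneg_dotProduct_eq_zero [DecidableEq ι]
    (h : ∀ y : ι → ℝ, 0 ≤ y → c ⬝ᵥ y = 0 → y = 0) : (∀ i, 0 < c i) ∨ (∀ i, c i < 0) := by
  have hne : ∀ i, c i ≠ 0 := fun i hi => by
    have := h (Pi.single i 1) (Pi.single_nonneg.2 zero_le_one) (by simp [hi])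
    simpa using congrFun this i
  have hmixed : ∀ i j, c i < 0 → 0 < c j → False := fun i j hi hj => by
    have hy_i : (0 : ι → ℝ) ≤ Pi.single i (c j) := Pi.single_nonneg.2 hj.le
    have hy_j : (0 : ι → ℝ) ≤ Pi.single j (-c i) := Pi.single_nonneg.2 (neg_nonneg.2 hi.le)
    set y : ι → ℝ := Pi.single i (c j) + Pi.single j (-c i)
    have hy : 0 ≤ y := add_nonneg hy_i hy_j
    have hdot : c ⬝ᵥ y = 0 := by
      simp only [y, dotProduct_add, dotProduct_single]
      ring
    have hyj : 0 < y j := by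
      have := hy_i j
      simp only [y, Pi.add_apply, Pi.single_eq_same, Pi.zero_apply] at this ⊢
      linarith
    exact hyj.ne' (congrFun (h y hy hdot) j)
  by_contra hcon
  push Not at hcon
  obtain ⟨⟨i, hi⟩, ⟨j, hj⟩⟩ := hcon
  exact hmixed i j (hi.lt_of_ne (hne i)) (hj.lt_of_ne' (hne j))

lemma forall_nonneg_dotProduct_eq_zero_imp_eq_zero_iff [DecidableEq ι] :
    (∀ y : ι → ℝ, 0 ≤ y → c ⬝ᵥ y = 0 → y = 0) ↔ (∀ i, 0 < c i) ∨ (∀ i, c i < 0) := by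
  refine ⟨pos_or_neg_of_forall_nonneg_dotProduct_eq_zero, ?_⟩
  rintro (hpos | hneg) y hy h
  · exact eq_zero_of_nonneg_of_dotProduct_eq_zero hpos hy h
  · refine eq_zero_of_nonneg_of_dotProduct_eq_zero (c := -c) (fun i => ?_) hy ?_
    · simpa using hneg i
    · rw [neg_dotProduct, h, neg_zero]

end

theorem stmt1_general (d : ℕ) (M : Matrix (Fin d) (Fin (d + 1)) ℝ)
    (hrank : M.rank = d) :
    IsOriented M ↔
      {x : Fin d → ℝ | ∀ i : Fin (d + 1), 0 ≤ ∑ r, M r i * x r} = {0} := by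
  have hrows : LinearIndependent ℝ M.row :=
    linearIndependent_row_of_rank_eq (by rw [hrank, Fintype.card_fin])
  have hcone : {x : Fin d → ℝ | ∀ i : Fin (d + 1), 0 ≤ ∑ r, M r i * x r} = {x | 0 ≤ x ᵥ* M} := by
    ext x
    simp only [Set.mem_ofPred_eq, Pi.le_def, Pi.zero_apply, vecMul, dotProduct, mul_comm]
  change (∀ i, 0 < M.signedMinors i) ∨ (∀ i, M.signedMinors i < 0) ↔ _
  rw [hcone, setOf_nonneg_vecMul_eq_singleton_zero_iff hrows,
    ← forall_nonneg_dotProduct_eq_zero_imp_eq_zero_iff]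
  simp only [mem_range_vecMul_iff_signedMinors_dotProduct_eq_zero hrows]

theorem stmt1 (d : ℕ) (hd : 1 ≤ d) (M : Matrix (Fin d) (Fin (d + 1)) ℝ)
    (hrank : M.rank = d) :
    IsOriented M ↔
      {x : Fin d → ℝ | ∀ i : Fin (d + 1), 0 ≤ ∑ r, M r i * x r} = {0} :=
  stmt1_general d M hrank
end
end

section
/- Let τ be a d-simplex in ℝ^d with affinely independent vertices a_1, …, a_{d+1}, let a be any point in the interior of τ, and let D_τ be the d×(d+1) matrix with columns a_1 − a, a_2 − a, …, a_{d+1} − a. Then: (i) D_τ is oriented; (ii) a real d×(d+1) matrix C is oriented if and only if either minor(C,i)·minor(D_τ,i) > 0 for all i ∈ {1,…,d+1}, or minor(C,i)·minor(D_τ,i) < 0 for all i ∈ {1,…,d+1}. -/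
/-!
The barycentric coordinates of `p` form a positive vector in the kernel of `D`, and that kernel is
a line because the columns `aᵢ - p` span `ℝᵈ`. By Laplace expansion the signed minors
`(-1)ⁱ minor(D, i)` form another kernel vector, which is nonzero: deleting a column whose kernel
weight is nonzero leaves a spanning family. So the signed minors are a nonzero multiple of the
barycentric coordinates, i.e. `D` is oriented, and (ii) is a comparison of signs with `D`.
-/

open Matrix

noncomputable section

lemma cofactor_mulVec_eq_zero {d : ℕ} (M : Matrix (Fin d) (Fin (d + 1)) ℝ) :
    M *ᵥ (fun j => (-1 : ℝ) ^ (j : ℕ) * colMinor M j) = 0 := by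
  ext r
  -- `M` with its row `r` repeated on top is singular; expand along that top row.
  let N : Matrix (Fin (d + 1)) (Fin (d + 1)) ℝ := Matrix.of (Fin.cons (M r) M)
  have hN : N.det = 0 :=
    det_zero_of_row_eq (Fin.succ_ne_zero r).symm (by ext j; simp [N]; rfl)
  rw [det_succ_row_zero] at hN
  rw [Pi.zero_apply, ← hN, mulVec, dotProduct]
  refine Finset.sum_congr rfl fun j _ => ?_
  have hsub : N.submatrix Fin.succ j.succAbove = M.submatrix id j.succAbove := by
    ext k l; simp [N]; rfl
  rw [hsub, colMinor, show N 0 j = M r j by simp [N]; rfl]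
  ring

lemma mulVec_eq_submatrix_succAbove_mulVec {R m : Type*} [CommSemiring R] {n : ℕ}
    (M : Matrix m (Fin (n + 1)) R) {i : Fin (n + 1)} {x : Fin (n + 1) → R} (hx : x i = 0) :
    M *ᵥ x = M.submatrix id i.succAbove *ᵥ (x ∘ i.succAbove) := by
  ext r
  simp [mulVec, dotProduct, Fin.sum_univ_succAbove _ i, hx]

lemma colMinor_ne_zero {d : ℕ} {M : Matrix (Fin d) (Fin (d + 1)) ℝ}
    (hM : Function.Surjective M.mulVec) {w : Fin (d + 1) → ℝ} (hw : M *ᵥ w = 0)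
    {i : Fin (d + 1)} (hwi : w i ≠ 0) : colMinor M i ≠ 0 := by
  have hsurj : Function.Surjective (M.submatrix id i.succAbove).mulVec := by
    intro y
    obtain ⟨x, rfl⟩ := hM y
    refine ⟨(x - (x i / w i) • w) ∘ i.succAbove, ?_⟩
    rw [← mulVec_eq_submatrix_succAbove_mulVec, mulVec_sub, mulVec_smul, hw, smul_zero, sub_zero]
    simp [hwi]
  exact ((isUnit_iff_isUnit_det _).mp (mulVec_surjective_iff_isUnit.mp hsurj)).ne_zero

lemma exists_smul_eq_of_mulVec_eq_zero {K : Type*} [Field K] {d : ℕ}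
    {M : Matrix (Fin d) (Fin (d + 1)) K} (hM : Function.Surjective M.mulVec)
    {v w : Fin (d + 1) → K} (hw : M *ᵥ w = 0) (hw0 : w ≠ 0) (hv : M *ᵥ v = 0) :
    ∃ c : K, c • w = v := by
  have hker : Module.finrank K (LinearMap.ker M.mulVecLin) = 1 := by
    have := LinearMap.finrank_range_add_finrank_ker M.mulVecLin
    rw [LinearMap.range_eq_top.mpr hM, finrank_top] at this
    simp only [Module.finrank_fin_fun] at this
    omega
  obtain ⟨c, hc⟩ := (finrank_eq_one_iff_of_nonzero' (⟨w, hw⟩ : LinearMap.ker M.mulVecLin)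
    fun h => hw0 (congrArg Subtype.val h)).mp hker ⟨v, hv⟩
  exact ⟨c, congrArg Subtype.val hc⟩

theorem isOriented_of_mulVec_eq_zero {d : ℕ} {M : Matrix (Fin d) (Fin (d + 1)) ℝ}
    (hM : Function.Surjective M.mulVec) {w : Fin (d + 1) → ℝ} (hw : M *ᵥ w = 0)
    (hpos : ∀ i, 0 < w i) : IsOriented M := by
  have hw0 : w ≠ 0 := fun h => (hpos 0).ne' (by simp [h])
  obtain ⟨c, hc⟩ := exists_smul_eq_of_mulVec_eq_zero hM hw hw0 (cofactor_mulVec_eq_zero M)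
  have hcw : ∀ i : Fin (d + 1), (-1 : ℝ) ^ (i : ℕ) * colMinor M i = c * w i :=
    fun i => (congrFun hc i).symm
  have hc0 : c ≠ 0 := by
    rintro rfl
    exact colMinor_ne_zero hM hw (hpos 0).ne' (by simpa using hcw 0)
  rcases hc0.lt_or_gt with hc | hc
  · exact Or.inr fun i => hcw i ▸ mul_neg_of_neg_of_pos hc (hpos i)
  · exact Or.inl fun i => hcw i ▸ mul_pos hc (hpos i)

lemma forall_pos_or_forall_neg_iff_mul {ι : Type*} {e : ι → ℝ}
    (he : (∀ i, 0 < e i) ∨ ∀ i, e i < 0) (f : ι → ℝ) :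
    ((∀ i, 0 < f i) ∨ ∀ i, f i < 0) ↔ (∀ i, 0 < f i * e i) ∨ ∀ i, f i * e i < 0 := by
  rcases he with he | he
  · simp [mul_neg_iff, he, (he _).not_gt]
  · simp [mul_pos_iff, mul_neg_iff, he, (he _).not_gt, or_comm]

theorem IsOriented.isOriented_iff {d : ℕ} {M : Matrix (Fin d) (Fin (d + 1)) ℝ}
    (hM : IsOriented M) (C : Matrix (Fin d) (Fin (d + 1)) ℝ) :
    IsOriented C ↔
      (∀ i, 0 < colMinor C i * colMinor M i) ∨ ∀ i, colMinor C i * colMinor M i < 0 := by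
  have hsign : ∀ i : Fin (d + 1), (-1 : ℝ) ^ (i : ℕ) * colMinor C i *
      ((-1 : ℝ) ^ (i : ℕ) * colMinor M i) = colMinor C i * colMinor M i := fun i => by
    rw [mul_mul_mul_comm, ← mul_pow, neg_one_mul, neg_neg, one_pow, one_mul]
  rw [IsOriented, forall_pos_or_forall_neg_iff_mul hM]
  simp only [hsign]

lemma AffineBasis.mulVec_coord_eq_sub {k ι n : Type*} [CommRing k] [Fintype ι]
    (b : AffineBasis ι k (n → k)) (p q : n → k) {D : Matrix n ι k}
    (hD : ∀ r i, D r i = b i r - p r) : D *ᵥ (fun i => b.coord i q) = q - p := by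
  ext r
  have hq := congrFun (b.linear_combination_coord_eq_self q) r
  simp only [Finset.sum_apply, Pi.smul_apply, smul_eq_mul] at hq
  calc ∑ i, D r i * b.coord i q = ∑ i, b.coord i q * b i r - (∑ i, b.coord i q) * p r := by
        rw [Finset.sum_mul, ← Finset.sum_sub_distrib]
        exact Finset.sum_congr rfl fun i _ => by rw [hD]; ring
    _ = q r - p r := by rw [b.sum_coord_apply_eq_one, one_mul, hq]

theorem stmt5_general (d : ℕ) (a : Fin (d + 1) → Fin d → ℝ)
    (hindep : AffineIndependent ℝ a)
    (p : Fin d → ℝ) (hp : p ∈ interior (convexHull ℝ (Set.range a)))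
    (D : Matrix (Fin d) (Fin (d + 1)) ℝ) (hD : ∀ r i, D r i = a i r - p r) :
    IsOriented D ∧
      ∀ C : Matrix (Fin d) (Fin (d + 1)) ℝ,
        (IsOriented C ↔
          ((∀ i, 0 < colMinor C i * colMinor D i) ∨
           (∀ i, colMinor C i * colMinor D i < 0))) := by
  have htop : affineSpan ℝ (Set.range a) = ⊤ := by
    rw [hindep.affineSpan_eq_top_iff_card_eq_finrank_add_one]
    simp
  let b : AffineBasis (Fin (d + 1)) ℝ (Fin d → ℝ) := ⟨a, hindep, htop⟩
  have hpos : ∀ i, 0 < b.coord i p := by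
    rwa [show Set.range a = Set.range b from rfl, b.interior_convexHull] at hp
  have hker : D *ᵥ (fun i => b.coord i p) = 0 := by
    simpa using b.mulVec_coord_eq_sub p p hD
  have hsurj : Function.Surjective D.mulVec := fun y =>
    ⟨fun i => b.coord i (y + p), by simp [b.mulVec_coord_eq_sub p _ hD]⟩
  have hDor := isOriented_of_mulVec_eq_zero hsurj hker hpos
  exact ⟨hDor, hDor.isOriented_iff⟩

theorem stmt5 (d : ℕ) (hd : 1 ≤ d) (a : Fin (d + 1) → Fin d → ℝ)
    (hindep : AffineIndependent ℝ a)
    (p : Fin d → ℝ) (hp : p ∈ interior (convexHull ℝ (Set.range a)))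
    (D : Matrix (Fin d) (Fin (d + 1)) ℝ) (hD : ∀ r i, D r i = a i r - p r) :
    IsOriented D ∧
      ∀ C : Matrix (Fin d) (Fin (d + 1)) ℝ,
        (IsOriented C ↔
          ((∀ i, 0 < colMinor C i * colMinor D i) ∨
           (∀ i, colMinor C i * colMinor D i < 0))) :=
  stmt5_general d a hindep p hp D hD
end
end

section
/- Let Γ be a pure d-dimensional geometric simplicial complex in ℝ^d whose vertices lie in a point configuration A = {a_1,…,a_n} ⊂ ℝ^d, and suppose a real d×n matrix C positively decorates every d-simplex of Γ. Then the dual graph of Γ is bipartite. Explicitly, for a d-simplex τ of Γ with vertices a_{i_1},…,a_{i_{d+1}}, let Ã_τ (resp. C̃_τ) be the (d+1)×(d+1) matrix whose j-th column is (1, a_{i_j}) (resp. (1, c_{i_j}) where c_i is the i-th column of C); then the map τ ↦ sign(det(Ã_τ)·det(C̃_τ)) assigns opposite signs to any two d-simplices of Γ sharing a common facet. -/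
/-
Move the apex of `τ`, at position `p`, to the first column of `Ã_τ` and of `C̃_τ`: both
determinants change by `(-1)^p`, and for two simplices sharing a facet the remaining columns
coincide.

Expanding `det C̃_τ` along its row of ones gives `∑ (-1)^j minor(M, j)`; when `M` is oriented its
sign is that of every summand, in particular of the minor of the facet, so the signed
`C`-determinants of two neighbours agree in sign. By Cramer's rule
`(-1)^p det Ã_τ = (-1)^p' λ det Ã_τ'`, where `λ` is the barycentric coordinate of the apex of `τ`
with respect to the apex vertex of `τ'`. Since the two convex hulls meet only in the common facet,
the apex of `τ` lies beyond the facet hyperplane, so `λ < 0` and the signed `A`-determinants have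
opposite signs.
-/

open Matrix

noncomputable section

attribute [local instance] Classical.propDecidable

/-- `C` positively decorates the `d`-simplex with vertex indices `τ` if the
`d × (d+1)` submatrix of `C` given by the columns in `τ` (in increasing order)
is oriented. -/
def Decorates {d n : ℕ} (C : Matrix (Fin d) (Fin n) ℝ) (τ : Finset (Fin n)) : Prop :=
  ∃ h : τ.card = d + 1,
    IsOriented (C.submatrix id fun j => ((τ.orderIsoOfFin h) j).val)

open Set Finset

theorem neg_one_pow_sq {R : Type*} [Monoid R] [HasDistribNeg R] (k : ℕ) :
    ((-1 : R) ^ k) ^ 2 = 1 := by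
  rw [pow_right_comm, neg_one_sq, one_pow]

section Homogeneous

variable {d : ℕ}

-- The matrix with columns `(1, x j)`; the paper's `Ã_τ` and `C̃_τ` are of this form.
def homogMatrix {R : Type*} [CommRing R] (x : Fin (d + 1) → Fin d → R) :
    Matrix (Fin (d + 1)) (Fin (d + 1)) R :=
  Matrix.of (Fin.cons (fun _ => 1) fun r j => x j r)

theorem homogMatrix_comp {R : Type*} [CommRing R] (x : Fin (d + 1) → Fin d → R)
    (π : Fin (d + 1) → Fin (d + 1)) :
    homogMatrix (x ∘ π) = (homogMatrix x).submatrix id π := by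
  ext r j
  cases r using Fin.cases <;> rfl

theorem det_homogMatrix_cons_succAbove {R : Type*} [CommRing R] (x : Fin (d + 1) → Fin d → R)
    (p : Fin (d + 1)) (y : Fin d → R) :
    (homogMatrix (Fin.cons y (x ∘ p.succAbove))).det =
      (-1) ^ (p : ℕ) * (homogMatrix (Function.update x p y)).det := by
  have hperm : (Fin.cons y (x ∘ p.succAbove) : Fin (d + 1) → Fin d → R) =
      Function.update x p y ∘ p.cycleRange.symm := by
    ext j : 1
    cases j using Fin.cases with
    | zero => simp [Fin.cycleRange_symm_zero]
    | succ i => simp [Fin.cycleRange_symm_succ, Fin.succAbove_ne]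
  rw [hperm, homogMatrix_comp, det_permute', Equiv.Perm.sign_symm, Fin.sign_cycleRange]
  push_cast
  rfl

theorem det_homogMatrix_ne_zero {K : Type*} [Field K] {x : Fin (d + 1) → Fin d → K}
    (hx : AffineIndependent K x) : (homogMatrix x).det ≠ 0 := by
  intro hdet
  obtain ⟨w, hw0, hw⟩ := exists_mulVec_eq_zero_iff.2 hdet
  have hrow : ∀ r, ∑ j, homogMatrix x r j * w j = 0 := fun r => congrFun hw r
  have hsum : ∑ j, w j = 0 := by simpa [homogMatrix] using hrow 0
  have hvsub : univ.weightedVSub x w = (0 : Fin d → K) := by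
    rw [weightedVSub_eq_linear_combination _ hsum]
    ext r
    simpa [homogMatrix, mul_comm] using hrow r.succ
  exact hw0 (funext ((affineIndependent_iff_of_fintype K x).1 hx w hsum hvsub))

theorem det_homogMatrix_update {K : Type*} [Field K]
    (b : AffineBasis (Fin (d + 1)) K (Fin d → K)) (p : Fin (d + 1)) (y : Fin d → K) :
    (homogMatrix (Function.update b p y)).det = b.coord p y * (homogMatrix b).det := by
  have hcol : homogMatrix (Function.update b p y) =
      (homogMatrix b).updateCol p fun r => ∑ i, b.coord i y • homogMatrix b r i := by
    ext r j
    rcases eq_or_ne j p with rfl | hj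
    · cases r using Fin.cases with
      | zero => simp [homogMatrix, b.sum_coord_apply_eq_one]
      | succ r =>
        simpa [homogMatrix] using (congrFun (b.linear_combination_coord_eq_self y) r).symm
    · cases r using Fin.cases <;> simp [homogMatrix, hj]
  rw [hcol, det_updateCol_sum, smul_eq_mul]

theorem det_homogMatrix_transpose (M : Matrix (Fin d) (Fin (d + 1)) ℝ) :
    (homogMatrix Mᵀ).det = ∑ j : Fin (d + 1), (-1) ^ (j : ℕ) * colMinor M j := by
  rw [det_succ_row_zero]
  refine sum_congr rfl fun j _ => ?_
  simp only [homogMatrix, of_apply, Fin.cons_zero, mul_one]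
  rfl

end Homogeneous

theorem IsOriented.pos_mul_det_submatrix_succAbove {d : ℕ} {M : Matrix (Fin d) (Fin (d + 1)) ℝ}
    (hM : IsOriented M) (p : Fin (d + 1)) :
    0 < (-1) ^ (p : ℕ) * (homogMatrix Mᵀ).det * (M.submatrix id p.succAbove).det := by
  rw [det_homogMatrix_transpose, mul_comm ((-1 : ℝ) ^ (p : ℕ)), mul_assoc]
  change 0 < _ * ((-1) ^ (p : ℕ) * colMinor M p)
  rcases hM with hM | hM
  · exact mul_pos (sum_pos (fun j _ => hM j) univ_nonempty) (hM p)
  · exact mul_pos_of_neg_of_neg (sum_neg (fun j _ => hM j) univ_nonempty) (hM p)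

theorem IsOriented.pos_of_submatrix_succAbove_eq {d : ℕ} {M M' : Matrix (Fin d) (Fin (d + 1)) ℝ}
    (hM : IsOriented M) (hM' : IsOriented M') {p p' : Fin (d + 1)}
    (hfacet : M.submatrix id p.succAbove = M'.submatrix id p'.succAbove) :
    0 < (-1) ^ (p : ℕ) * (homogMatrix Mᵀ).det * ((-1) ^ (p' : ℕ) * (homogMatrix M'ᵀ).det) := by
  have h := hM.pos_mul_det_submatrix_succAbove p
  have h' := hM'.pos_mul_det_submatrix_succAbove p'
  rw [← hfacet] at h'
  nlinarith [mul_pos h h', sq_nonneg (M.submatrix id p.succAbove).det]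

open Filter Topology in
theorem AffineBasis.coord_nonpos_of_convexHull_inter_subset {ι E : Type*} [Fintype ι]
    [Nontrivial ι] [AddCommGroup E] [Module ℝ E] (b : AffineBasis ι ℝ E) (i : ι) {s : Set E}
    {y : E} (hy : y ∈ s) (hfacet : ∀ j ≠ i, b j ∈ s)
    (hinter : convexHull ℝ s ∩ convexHull ℝ (range b) ⊆ {x | b.coord i x = 0}) :
    b.coord i y ≤ 0 := by
  classical
  -- Walking from the barycentre `g` of the facet opposite `b i` a little towards `y` stays in
  -- both convex hulls while leaving the hyperplane `b.coord i = 0`.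
  by_contra! hpos
  obtain ⟨j₀, hj₀⟩ := exists_ne i
  have hne : (univ.erase i).Nonempty := ⟨j₀, mem_erase.2 ⟨hj₀, mem_univ j₀⟩⟩
  set g := (univ.erase i).centroid ℝ b with hg
  have hg_mem : g ∈ convexHull ℝ s := by
    rw [hg, centroid_eq_centerMass _ hne]
    refine centerMass_mem_convexHull _ (fun _ _ => by simp) ?_
      fun j hj => hfacet j (ne_of_mem_erase hj)
    rw [sum_centroidWeights_eq_one_of_nonempty ℝ _ hne]
    exact one_pos
  have hgi : b.coord i g = 0 :=
    b.coord_apply_combination_of_notMem (notMem_erase i univ)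
      (sum_centroidWeights_eq_one_of_nonempty ℝ _ hne)
  have hgj : ∀ j ≠ i, 0 < b.coord j g := fun j hj => by
    rw [b.coord_apply_centroid (mem_erase.2 ⟨hj, mem_univ j⟩)]
    exact inv_pos.2 (Nat.cast_pos.2 (card_pos.2 hne))
  have hline : ∀ j t, b.coord j (AffineMap.lineMap g y t) =
      (1 - t) * b.coord j g + t * b.coord j y := by
    intro j t
    rw [AffineMap.apply_lineMap, AffineMap.lineMap_apply_module, smul_eq_mul, smul_eq_mul]
  have hnear : ∀ᶠ t in 𝓝 (0 : ℝ), ∀ j ≠ i, 0 < b.coord j (AffineMap.lineMap g y t) := by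
    refine eventually_all.2 fun j => ?_
    by_cases hj : j = i
    · exact .of_forall fun _ hj' => absurd hj hj'
    have hcont : Continuous fun t : ℝ => (1 - t) * b.coord j g + t * b.coord j y := by
      fun_prop
    filter_upwards [(hcont.tendsto 0).eventually_const_lt (by simpa using hgj j hj)] with t ht
    exact fun _ => (hline j t).symm ▸ ht
  have hIoo : ∀ᶠ t in 𝓝[>] (0 : ℝ), t ∈ Set.Ioo 0 1 := Ioo_mem_nhdsGT one_pos
  obtain ⟨t, ⟨ht0, ht1⟩, htj⟩ := (hIoo.and (nhdsWithin_le_nhds hnear)).exists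
  have hx : AffineMap.lineMap g y t ∈ convexHull ℝ s ∩ convexHull ℝ (range b) := by
    refine ⟨(convex_convexHull ℝ s).lineMap_mem hg_mem (subset_convexHull ℝ s hy) ⟨ht0.le, ht1.le⟩,
      ?_⟩
    rw [b.convexHull_eq_nonneg_coord]
    intro j
    rcases eq_or_ne j i with rfl | hj
    · rw [hline, hgi]
      positivity
    · exact (htj j hj).le
  have h0 : b.coord i (AffineMap.lineMap g y t) = 0 := hinter hx
  rw [hline, hgi] at h0
  nlinarith

theorem neg_one_pow_mul_det_homogMatrix_mul_neg {d : ℕ} (hd : 1 ≤ d)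
    {x x' : Fin (d + 1) → Fin d → ℝ} {p p' : Fin (d + 1)}
    (hx : AffineIndependent ℝ x) (hx' : AffineIndependent ℝ x')
    (hfacet : x ∘ p.succAbove = x' ∘ p'.succAbove)
    (hinter : convexHull ℝ (range x) ∩ convexHull ℝ (range x') ⊆
      convexHull ℝ (range (x ∘ p.succAbove))) :
    (-1) ^ (p : ℕ) * (homogMatrix x).det * ((-1) ^ (p' : ℕ) * (homogMatrix x').det) < 0 := by
  have : Nontrivial (Fin (d + 1)) := Fin.nontrivial_iff_two_le.2 (by omega)
  have htot : affineSpan ℝ (range x') = ⊤ :=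
    hx'.affineSpan_eq_top_iff_card_eq_finrank_add_one.2 (by simp)
  let b : AffineBasis (Fin (d + 1)) ℝ (Fin d → ℝ) := ⟨x', hx', htot⟩
  have hfacet_b : ∀ m, x (p.succAbove m) = b (p'.succAbove m) := congrFun hfacet
  have hq : b.coord p' (x p) ≤ 0 := by
    refine b.coord_nonpos_of_convexHull_inter_subset p' (mem_range_self p) (fun j hj => ?_) ?_
    · obtain ⟨m, rfl⟩ := Fin.exists_succAbove_eq hj
      exact ⟨p.succAbove m, hfacet_b m⟩
    · refine hinter.trans (convexHull_min ?_ ((convex_singleton 0).affine_preimage (b.coord p')))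
      rintro _ ⟨m, rfl⟩
      change b.coord p' (x (p.succAbove m)) = 0
      rw [hfacet_b]
      exact b.coord_apply_ne (Fin.succAbove_ne p' m).symm
  have hcons : (homogMatrix (Fin.cons (x p) (x ∘ p.succAbove))).det =
      (-1) ^ (p : ℕ) * (homogMatrix x).det := by
    rw [det_homogMatrix_cons_succAbove, Function.update_eq_self]
  have hcons' : (homogMatrix (Fin.cons (x p) (x' ∘ p'.succAbove))).det =
      (-1) ^ (p' : ℕ) * (b.coord p' (x p) * (homogMatrix x').det) := by
    rw [det_homogMatrix_cons_succAbove]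
    exact congrArg _ (det_homogMatrix_update b p' (x p))
  have hdet := hcons.symm.trans (hfacet ▸ hcons')
  have hA : (-1) ^ (p : ℕ) * (homogMatrix x).det ≠ 0 :=
    mul_ne_zero (pow_ne_zero _ (by norm_num)) (det_homogMatrix_ne_zero hx)
  rw [hdet] at hA ⊢
  have hq_neg : b.coord p' (x p) < 0 := hq.lt_of_ne fun h => hA (by rw [h]; ring)
  have hD : (homogMatrix x').det ≠ 0 := det_homogMatrix_ne_zero hx'
  calc (-1) ^ (p' : ℕ) * (b.coord p' (x p) * (homogMatrix x').det) *
        ((-1) ^ (p' : ℕ) * (homogMatrix x').det)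
      = b.coord p' (x p) * (((-1 : ℝ) ^ (p' : ℕ)) ^ 2 * (homogMatrix x').det ^ 2) := by ring
    _ < 0 := by rw [neg_one_pow_sq, one_mul]; exact mul_neg_of_neg_of_pos hq_neg (by positivity)

theorem det_homogMatrix_mul_det_homogMatrix_neg {d : ℕ} (hd : 1 ≤ d)
    {x x' : Fin (d + 1) → Fin d → ℝ} {M M' : Matrix (Fin d) (Fin (d + 1)) ℝ} {p p' : Fin (d + 1)}
    (hx : AffineIndependent ℝ x) (hx' : AffineIndependent ℝ x')
    (hfacet : x ∘ p.succAbove = x' ∘ p'.succAbove)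
    (hinter : convexHull ℝ (range x) ∩ convexHull ℝ (range x') ⊆
      convexHull ℝ (range (x ∘ p.succAbove)))
    (hM : IsOriented M) (hM' : IsOriented M')
    (hfacetM : M.submatrix id p.succAbove = M'.submatrix id p'.succAbove) :
    (homogMatrix x).det * (homogMatrix Mᵀ).det *
      ((homogMatrix x').det * (homogMatrix M'ᵀ).det) < 0 := by
  have hA := neg_one_pow_mul_det_homogMatrix_mul_neg hd hx hx' hfacet hinter
  have hC := hM.pos_of_submatrix_succAbove_eq hM' hfacetM
  calc (homogMatrix x).det * (homogMatrix Mᵀ).det * ((homogMatrix x').det * (homogMatrix M'ᵀ).det)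
      = ((-1) ^ (p : ℕ)) ^ 2 * ((-1) ^ (p' : ℕ)) ^ 2 * ((homogMatrix x).det *
          (homogMatrix Mᵀ).det * ((homogMatrix x').det * (homogMatrix M'ᵀ).det)) := by
        rw [neg_one_pow_sq, neg_one_pow_sq, one_mul, one_mul]
    _ = ((-1) ^ (p : ℕ) * (homogMatrix x).det * ((-1) ^ (p' : ℕ) * (homogMatrix x').det)) *
        ((-1) ^ (p : ℕ) * (homogMatrix Mᵀ).det * ((-1) ^ (p' : ℕ) * (homogMatrix M'ᵀ).det)) := by
        ring
    _ < 0 := mul_neg_of_neg_of_pos hA hC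

theorem Finset.exists_orderEmbOfFin_succAbove {α : Type*} [LinearOrder α] {σ τ : Finset α}
    {d : ℕ} (hστ : σ ⊆ τ) (hσ : σ.card = d) (hτ : τ.card = d + 1) :
    ∃ p : Fin (d + 1), ∀ i, τ.orderEmbOfFin hτ (p.succAbove i) = σ.orderEmbOfFin hσ i := by
  obtain ⟨v, hv⟩ : ∃ v, τ \ σ = {v} := card_eq_one.1 (by rw [card_sdiff_of_subset hστ]; omega)
  have hvτ : v ∈ Set.range (τ.orderEmbOfFin hτ) := by
    rw [range_orderEmbOfFin]
    exact (mem_sdiff.1 (hv ▸ mem_singleton_self v)).1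
  obtain ⟨p, hp⟩ := hvτ
  refine ⟨p, fun i => congrFun (orderEmbOfFin_unique hσ (fun i => ?_)
    ((τ.orderEmbOfFin hτ).strictMono.comp (Fin.strictMono_succAbove p))) i⟩
  by_contra hi
  have : τ.orderEmbOfFin hτ (p.succAbove i) ∈ τ \ σ := mem_sdiff.2 ⟨orderEmbOfFin_mem τ hτ _, hi⟩
  rw [hv, mem_singleton, ← hp] at this
  exact Fin.succAbove_ne p i ((τ.orderEmbOfFin hτ).injective this)

theorem Real.sign_eq_neg_sign_of_mul_neg {x y : ℝ} (h : x * y < 0) :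
    Real.sign x = -Real.sign y := by
  rcases mul_neg_iff.1 h with ⟨hx, hy⟩ | ⟨hx, hy⟩
  · rw [Real.sign_of_pos hx, Real.sign_of_neg hy, neg_neg]
  · rw [Real.sign_of_neg hx, Real.sign_of_pos hy]

theorem decide_pos_ne_of_mul_neg {x y : ℝ} (h : x * y < 0) : decide (0 < x) ≠ decide (0 < y) := by
  rcases mul_neg_iff.1 h with ⟨hx, hy⟩ | ⟨hx, hy⟩ <;> simp [hx, hy, hx.le, hy.le, not_lt.2]

theorem stmt7 (d n : ℕ) (hd : 1 ≤ d) (a : Fin n → Fin d → ℝ)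
    (C : Matrix (Fin d) (Fin n) ℝ) (Γ : Finset (Finset (Fin n)))
    (hcard : ∀ τ ∈ Γ, τ.card = d + 1)
    (hindep : ∀ τ ∈ Γ, AffineIndependent ℝ fun i : {x // x ∈ τ} => a i.val)
    (hcomplex : ∀ τ ∈ Γ, ∀ τ' ∈ Γ,
      convexHull ℝ (a '' ↑τ) ∩ convexHull ℝ (a '' ↑τ') = convexHull ℝ (a '' ↑(τ ∩ τ')))
    (hdec : ∀ τ ∈ Γ, Decorates C τ)
    (At Ct : ∀ τ : Finset (Fin n), τ ∈ Γ → Matrix (Fin (d + 1)) (Fin (d + 1)) ℝ)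
    (hAt : ∀ τ (h : τ ∈ Γ), At τ h = Matrix.of (Fin.cons (fun _ => (1 : ℝ))
      (fun r j => a ((τ.orderIsoOfFin (hcard τ h)) j).val r)))
    (hCt : ∀ τ (h : τ ∈ Γ), Ct τ h = Matrix.of (Fin.cons (fun _ => (1 : ℝ))
      (fun r j => C r ((τ.orderIsoOfFin (hcard τ h)) j).val))) :
    (∃ χ : Finset (Fin n) → Bool,
      ∀ τ ∈ Γ, ∀ τ' ∈ Γ, τ ≠ τ' → (τ ∩ τ').card = d → χ τ ≠ χ τ') ∧
    (∀ τ (h : τ ∈ Γ) τ' (h' : τ' ∈ Γ), τ ≠ τ' → (τ ∩ τ').card = d →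
      Real.sign ((At τ h).det * (Ct τ h).det) = - Real.sign ((At τ' h').det * (Ct τ' h').det)) := by
  have hrange : ∀ (τ : Finset (Fin n)) {k} (h : τ.card = k),
      Set.range (a ∘ τ.orderEmbOfFin h) = a '' τ := fun τ _ h => by
    rw [Set.range_comp, range_orderEmbOfFin]
  have key : ∀ τ (h : τ ∈ Γ) τ' (h' : τ' ∈ Γ), (τ ∩ τ').card = d →
      (At τ h).det * (Ct τ h).det * ((At τ' h').det * (Ct τ' h').det) < 0 := by
    intro τ h τ' h' hcd
    obtain ⟨p, hp⟩ := exists_orderEmbOfFin_succAbove inter_subset_left hcd (hcard τ h)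
    obtain ⟨p', hp'⟩ := exists_orderEmbOfFin_succAbove inter_subset_right hcd (hcard τ' h')
    obtain ⟨_, hCτ⟩ := hdec τ h
    obtain ⟨_, hCτ'⟩ := hdec τ' h'
    rw [hAt, hCt, hAt, hCt]
    refine det_homogMatrix_mul_det_homogMatrix_neg hd
      ((hindep τ h).comp_embedding (τ.orderIsoOfFin _).toEquiv.toEmbedding)
      ((hindep τ' h').comp_embedding (τ'.orderIsoOfFin _).toEquiv.toEmbedding)
      (p := p) (p' := p') ?_ ?_ hCτ hCτ' ?_
    · funext i
      exact congrArg a ((hp i).trans (hp' i).symm)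
    · have hσ : (fun j => a (τ.orderIsoOfFin (hcard τ h) j).val) ∘ p.succAbove =
          a ∘ (τ ∩ τ').orderEmbOfFin hcd := funext fun i => congrArg a (hp i)
      rw [hσ, hrange, ← hcomplex τ h τ' h', ← hrange τ (hcard τ h), ← hrange τ' (hcard τ' h')]
      exact subset_rfl
    · ext r i
      exact congrArg (C r) ((hp i).trans (hp' i).symm)
  refine ⟨⟨fun τ => if h : τ ∈ Γ then decide (0 < (At τ h).det * (Ct τ h).det) else false,
    fun τ h τ' h' _ hcd => ?_⟩,
    fun τ h τ' h' _ hcd => Real.sign_eq_neg_sign_of_mul_neg (key τ h τ' h' hcd)⟩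
  simp only [dif_pos h, dif_pos h']
  exact decide_pos_ne_of_mul_neg (key τ h τ' h' hcd)
end
end

section
/- Let e_1, …, e_d be the canonical basis vectors of ℝ^d and let e_{d+1} = (−1,…,−1) ∈ ℝ^d. Let Γ be a pure d-dimensional geometric simplicial complex with vertices in a point configuration A = {a_1,…,a_n} ⊂ ℝ^d, and suppose Γ is balanced with (d+1)-coloring γ: A → {1,…,d+1} (γ takes different values on the two endpoints of every edge of Γ). Then the d×n matrix C whose i-th column is e_{γ(a_i)} positively decorates every d-simplex of Γ. -/
open Matrix

noncomputable section

attribute [local instance] Classical.propDecidable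

/-!
The columns of the decorating submatrix of a coloured simplex are `e₁, …, e_{d+1}` in some
order, so they sum to zero. For any `d × (d+1)` matrix `M` whose columns sum to zero, the signed
minors `(-1)^i * minor(M, i)` all coincide: their differences are determinants of `M` with a row
`δᵢ - δₖ` adjoined, and these matrices kill the all-ones vector. Deleting the column `e_{d+1}`
leaves a permutation matrix, so the common value is nonzero.
-/

theorem det_of_vecCons_eq_sum_colMinor {d : ℕ} (v : Fin (d + 1) → ℝ)
    (M : Matrix (Fin d) (Fin (d + 1)) ℝ) :
    (of (vecCons v M)).det =
      ∑ j : Fin (d + 1), (-1 : ℝ) ^ (j : ℕ) * v j * colMinor M j := by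
  rw [det_succ_row_zero]
  rfl

theorem neg_one_pow_mul_colMinor_eq_of_mulVec_one_eq_zero {d : ℕ}
    {M : Matrix (Fin d) (Fin (d + 1)) ℝ} (hM : M *ᵥ 1 = 0) (i k : Fin (d + 1)) :
    (-1 : ℝ) ^ (i : ℕ) * colMinor M i = (-1 : ℝ) ^ (k : ℕ) * colMinor M k := by
  set N := of (vecCons (Pi.single i 1 - Pi.single k 1) M)
  have hN : N *ᵥ 1 = 0 := by
    ext r
    cases r using Fin.cases with
    | zero => simp [N, mulVec, dotProduct, Finset.sum_sub_distrib]
    | succ r => exact congrFun hM r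
  have hdet : N.det = 0 := exists_mulVec_eq_zero_iff.mp ⟨1, one_ne_zero, hN⟩
  rw [det_of_vecCons_eq_sum_colMinor] at hdet
  simp only [Pi.sub_apply, mul_sub, sub_mul, Finset.sum_sub_distrib, Pi.single_apply, mul_ite,
    mul_one, mul_zero, ite_mul, zero_mul, Finset.sum_ite_eq'] at hdet
  simpa [sub_eq_zero] using hdet

theorem isOriented_of_mulVec_one_eq_zero {d : ℕ} {M : Matrix (Fin d) (Fin (d + 1)) ℝ}
    (hM : M *ᵥ 1 = 0) {k : Fin (d + 1)} (hk : colMinor M k ≠ 0) : IsOriented M := by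
  have hc : (-1 : ℝ) ^ (k : ℕ) * colMinor M k ≠ 0 := mul_ne_zero (by simp) hk
  simp only [IsOriented, neg_one_pow_mul_colMinor_eq_of_mulVec_one_eq_zero hM _ k]
  rcases hc.lt_or_gt with hneg | hpos
  · exact Or.inr fun _ => hneg
  · exact Or.inl fun _ => hpos

def simplexVertex (d : ℕ) : Fin (d + 1) → Fin d → ℝ :=
  Fin.lastCases (-1) fun c => Pi.single c 1

theorem sum_simplexVertex (d : ℕ) : ∑ c, simplexVertex d c = 0 := by
  simp [Fin.sum_univ_castSucc, simplexVertex, Finset.univ_sum_single, Pi.one_def]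

theorem simplexVertex_apply (d : ℕ) (c : Fin (d + 1)) (r : Fin d) :
    simplexVertex d c r = if (c : ℕ) = d then -1 else if (r : ℕ) = (c : ℕ) then 1 else 0 := by
  cases c using Fin.lastCases with
  | last => simp [simplexVertex]
  | cast c => simp [simplexVertex, Pi.single_apply, Fin.ext_iff, c.isLt.ne]

theorem simplexVertex_castSucc (d : ℕ) (c : Fin d) :
    simplexVertex d c.castSucc = Pi.single c 1 :=
  Fin.lastCases_castSucc _

theorem det_of_single_ne_zero {m : Type*} [Fintype m] [DecidableEq m] {σ : m → m}
    (hσ : Function.Injective σ) : (of fun r j => (Pi.single (σ j) 1 : m → ℝ) r).det ≠ 0 := by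
  have h : (of fun r j => (Pi.single (σ j) 1 : m → ℝ) r) =
      (1 : Matrix m m ℝ).submatrix id (Equiv.ofBijective σ hσ.bijective_of_finite) := by
    ext r j
    simp [Pi.single_apply, one_apply]
  rw [h, det_permute', det_one, mul_one]
  exact_mod_cast (Equiv.Perm.sign _).ne_zero

theorem isOriented_of_simplexVertex_perm {d : ℕ} (κ : Equiv.Perm (Fin (d + 1))) :
    IsOriented (of fun r j => simplexVertex d (κ j) r) := by
  set k := κ.symm (Fin.last d)
  have hM : (of fun r j => simplexVertex d (κ j) r) *ᵥ 1 = 0 := by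
    ext r
    simpa [mulVec, dotProduct, Equiv.sum_comp κ (fun c => simplexVertex d c r)]
      using congrFun (sum_simplexVertex d) r
  have hlast (j : Fin d) : κ (k.succAbove j) ≠ Fin.last d := by
    rw [← κ.apply_symm_apply (Fin.last d), κ.injective.ne_iff]
    exact Fin.succAbove_ne k j
  refine isOriented_of_mulVec_one_eq_zero hM (k := k) ?_
  have hinj : Function.Injective fun j => (κ (k.succAbove j)).castPred (hlast j) :=
    fun i j hij => Fin.succAbove_right_injective (κ.injective (Fin.castPred_inj.mp hij))
  convert det_of_single_ne_zero hinj using 1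
  simp only [← simplexVertex_castSucc, Fin.castSucc_castPred]
  rfl

theorem stmt8_general (d n : ℕ)
    (Γ : Finset (Finset (Fin n)))
    (hcard : ∀ τ ∈ Γ, τ.card = d + 1)
    (γ : Fin n → Fin (d + 1))
    (hcol : ∀ τ ∈ Γ, ∀ i ∈ τ, ∀ j ∈ τ, i ≠ j → γ i ≠ γ j)
    (E : Fin (d + 1) → Fin d → ℝ)
    (hE : ∀ c r, E c r = if (c : ℕ) = d then -1 else if (r : ℕ) = (c : ℕ) then 1 else 0)
    (C : Matrix (Fin d) (Fin n) ℝ) (hC : ∀ r i, C r i = E (γ i) r) :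
    ∀ τ ∈ Γ, Decorates C τ := by
  intro τ hτ
  have hE' : E = simplexVertex d :=
    funext₂ fun c r => (hE c r).trans (simplexVertex_apply d c r).symm
  set f := τ.orderIsoOfFin (hcard τ hτ)
  have hinj : Function.Injective fun j => γ (f j) := fun i j hij => by
    by_contra hne
    exact hcol τ hτ _ (f i).2 _ (f j).2 (Subtype.coe_injective.ne (f.injective.ne hne)) hij
  refine ⟨hcard τ hτ, ?_⟩
  convert isOriented_of_simplexVertex_perm (Equiv.ofBijective _ hinj.bijective_of_finite) using 1
  ext r j
  simp [f, hC, hE']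

theorem stmt8 (d n : ℕ) (hd : 1 ≤ d) (a : Fin n → Fin d → ℝ)
    (Γ : Finset (Finset (Fin n)))
    (hcard : ∀ τ ∈ Γ, τ.card = d + 1)
    (γ : Fin n → Fin (d + 1))
    (hcol : ∀ τ ∈ Γ, ∀ i ∈ τ, ∀ j ∈ τ, i ≠ j → γ i ≠ γ j)
    (E : Fin (d + 1) → Fin d → ℝ)
    (hE : ∀ c r, E c r = if (c : ℕ) = d then -1 else if (r : ℕ) = (c : ℕ) then 1 else 0)
    (C : Matrix (Fin d) (Fin n) ℝ) (hC : ∀ r i, C r i = E (γ i) r) :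
    ∀ τ ∈ Γ, Decorates C τ :=
  stmt8_general d n Γ hcard γ hcol E hE C hC
end
end

section
/- Let d ≥ 1 and let d_1 + ⋯ + d_k = d be a partition of d into positive integers. Then there exist strictly totally positive real matrices T^{(1)}, …, T^{(k)} of respective sizes (d_1+1)×d, …, (d_k+1)×d such that every solution in (ℂ∖{0})^d of the system f_1(X) = ⋯ = f_d(X) = 0 lies in the positive orthant (ℝ_{>0})^d, where, in variables X = (X_{uj}) with 1 ≤ u ≤ k and 1 ≤ j ≤ d_u, f_i(X) = ∏_{u=1}^{k} ( (−1)^{d_u+1} T^{(u)}_{d_u+1, i} + Σ_{j=1}^{d_u} (−1)^j T^{(u)}_{j,i} X_{uj} ). -/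
/-!
Take for `T⁽ᵘ⁾` the Cauchy matrix `(1 / (l + i + 1))`, which is strictly totally positive because
every square Cauchy matrix with increasing parameters has positive determinant.

For a solution `v`, the `u`-th factor at `i` is `(y_u ᵥ* T⁽ᵘ⁾) i` with the nonzero vector
`y_u = ((-1)ʲ⁺¹ v_{u,j})_j ++ ((-1)^(d_u+1))`. Any `d_u + 1` columns of `T⁽ᵘ⁾` form an invertible
matrix, so the `u`-th factor vanishes at no more than `d_u` indices `i`. Every `i` is a zero of some
factor and `∑ d_u = d`, so the `u`-th factor vanishes at exactly `d_u` indices. The left kernel of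
these `d_u` columns is spanned by the vector of signed maximal minors, so each `v_{u,j}` is a
quotient of two maximal minors of `T⁽ᵘ⁾`, which are positive.
-/

noncomputable section

/-- A real matrix is strictly totally positive if all its minors of all sizes
are positive. -/
def StrictlyTotallyPositive {p q : ℕ} (T : Matrix (Fin p) (Fin q) ℝ) : Prop :=
  ∀ (r : ℕ) (ri : Fin r → Fin p) (ci : Fin r → Fin q), 1 ≤ r →
    StrictMono ri → StrictMono ci → 0 < (T.submatrix ri ci).det

open Matrix Finset

section Cauchy

variable {K : Type*} [Field K]

def cauchyMatrix {m n : Type*} (x : m → K) (y : n → K) : Matrix m n K :=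
  of fun i j => (x i + y j)⁻¹

@[simp]
lemma cauchyMatrix_apply {m n : Type*} (x : m → K) (y : n → K) (i : m) (j : n) :
    cauchyMatrix x y i j = (x i + y j)⁻¹ := rfl

lemma cauchyMatrix_submatrix {l m n o : Type*} (x : m → K) (y : n → K) (f : l → m) (g : o → n) :
    (cauchyMatrix x y).submatrix f g = cauchyMatrix (x ∘ f) (y ∘ g) := rfl

/-- Eliminating the first column against the entry `(0, 0)` leaves a Schur complement which is
again a Cauchy matrix, rescaled along its rows and columns. -/
lemma det_cauchyMatrix_succ {n : ℕ} (x y : Fin (n + 1) → K) (hxy : ∀ i j, x i + y j ≠ 0) :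
    (cauchyMatrix x y).det = (x 0 + y 0)⁻¹ *
      ((∏ j : Fin n, (y j.succ - y 0) / (x 0 + y j.succ)) *
        ((∏ i : Fin n, (x i.succ - x 0) / (x i.succ + y 0)) *
          (cauchyMatrix (x ∘ Fin.succ) (y ∘ Fin.succ)).det)) := by
  set C := cauchyMatrix x y
  let c : Fin (n + 1) → K := Fin.cases 0 fun i => (x 0 + y 0) / (x i.succ + y 0)
  let B : Matrix (Fin (n + 1)) (Fin (n + 1)) K := of fun i j => C i j - c i * C 0 j
  have hCB : C.det = B.det :=
    det_eq_of_forall_row_eq_smul_add_const c 0 rfl fun i j => by simp [B, c]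
  have hB0 : ∀ i : Fin n, B i.succ 0 = 0 := fun i => by
    have := hxy i.succ 0
    have := hxy 0 0
    simp only [cauchyMatrix_apply, of_apply, Fin.cases_succ, B, C, c]
    field_simp
    ring
  have hBsucc : B.submatrix Fin.succ Fin.succ = of fun i j =>
      (y j.succ - y 0) / (x 0 + y j.succ) *
        (of fun i j => (x i.succ - x 0) / (x i.succ + y 0) *
          cauchyMatrix (x ∘ Fin.succ) (y ∘ Fin.succ) i j) i j := by
    ext i j
    have := hxy i.succ j.succ
    have := hxy i.succ 0
    have := hxy 0 j.succ
    have := hxy 0 0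
    simp only [cauchyMatrix_apply, submatrix_apply, of_apply, Fin.cases_succ, Function.comp_apply,
      B, C, c]
    field_simp
    ring
  rw [hCB, det_succ_column_zero, Fin.sum_univ_succ, Fin.succAbove_zero, hBsucc, det_mul_row,
    det_mul_column]
  simp only [hB0, mul_zero, zero_mul, sum_const_zero, add_zero]
  simp [B, C, c]

variable [LinearOrder K] [IsStrictOrderedRing K]

lemma det_cauchyMatrix_pos {n : ℕ} (x y : Fin n → K) (hx : StrictMono x) (hy : StrictMono y)
    (hxy : ∀ i j, 0 < x i + y j) : 0 < (cauchyMatrix x y).det := by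
  induction n with
  | zero => simp
  | succ n ih =>
    rw [det_cauchyMatrix_succ x y fun i j => (hxy i j).ne']
    have hx0 : ∀ i : Fin n, 0 < x i.succ - x 0 := fun i => sub_pos.2 (hx (Fin.succ_pos i))
    have hy0 : ∀ j : Fin n, 0 < y j.succ - y 0 := fun j => sub_pos.2 (hy (Fin.succ_pos j))
    have := ih _ _ (hx.comp Fin.strictMono_succ) (hy.comp Fin.strictMono_succ)
      fun i j => hxy _ _
    have := hxy 0 0
    have := prod_pos fun i (_ : i ∈ univ) => div_pos (hx0 i) (hxy i.succ 0)
    have := prod_pos fun j (_ : j ∈ univ) => div_pos (hy0 j) (hxy 0 j.succ)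
    positivity

end Cauchy

lemma StrictlyTotallyPositive.det_submatrix_pos {p q r : ℕ} {T : Matrix (Fin p) (Fin q) ℝ}
    (hT : StrictlyTotallyPositive T) {ri : Fin r → Fin p} {ci : Fin r → Fin q}
    (hri : StrictMono ri) (hci : StrictMono ci) : 0 < (T.submatrix ri ci).det := by
  rcases r.eq_zero_or_pos with rfl | hr
  · simp
  · exact hT r ri ci hr hri hci

lemma strictlyTotallyPositive_cauchyMatrix {p q : ℕ} (x : Fin p → ℝ) (y : Fin q → ℝ)
    (hx : StrictMono x) (hy : StrictMono y) (hxy : ∀ i j, 0 < x i + y j) :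
    StrictlyTotallyPositive (cauchyMatrix x y) := fun _ _ _ _ hri hci => by
  rw [cauchyMatrix_submatrix]
  exact det_cauchyMatrix_pos _ _ (hx.comp hri) (hy.comp hci) fun _ _ => hxy _ _

namespace Matrix

variable {n : ℕ}

def signedMaximalMinors {R : Type*} [CommRing R] (M : Matrix (Fin (n + 1)) (Fin n) R) :
    Fin (n + 1) → R :=
  fun l => (-1) ^ (l : ℕ) * (M.submatrix l.succAbove id).det

/-- Laplace expansion of the matrix obtained from `M` by repeating its column `s` in front. -/
lemma signedMaximalMinors_vecMul {R : Type*} [CommRing R] (M : Matrix (Fin (n + 1)) (Fin n) R) :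
    signedMaximalMinors M ᵥ* M = 0 := by
  funext s
  let A : Matrix (Fin (n + 1)) (Fin (n + 1)) R := of fun l => Fin.cons (M l s) (M l)
  have hA : A.det = 0 := det_zero_of_column_eq (Fin.succ_ne_zero s).symm fun l => by simp [A]
  have hminor : ∀ l : Fin (n + 1),
      A.submatrix l.succAbove Fin.succ = M.submatrix l.succAbove id := fun l => by
    ext; simp [A]
  rw [det_succ_column_zero] at hA
  refine (sum_congr rfl fun l _ => ?_).trans hA
  simp only [signedMaximalMinors, hminor]
  simp only [of_apply, Fin.cons_zero, A]
  ring

lemma smul_eq_smul_signedMaximalMinors {K : Type*} [Field K] {M : Matrix (Fin (n + 1)) (Fin n) K}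
    (hM : (M.submatrix Fin.castSucc id).det ≠ 0) {x : Fin (n + 1) → K} (hx : x ᵥ* M = 0) :
    signedMaximalMinors M (Fin.last n) • x = x (Fin.last n) • signedMaximalMinors M := by
  set c := signedMaximalMinors M
  set g := c (Fin.last n) • x - x (Fin.last n) • c
  have hg : g ᵥ* M = 0 := by
    simp [g, c, sub_vecMul, smul_vecMul, hx, signedMaximalMinors_vecMul]
  have hg_last : g (Fin.last n) = 0 := by
    simp [g, mul_comm]
  have hg_castSucc : g ∘ Fin.castSucc = 0 := eq_zero_of_vecMul_eq_zero hM <| funext fun s => by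
    simpa [vecMul, dotProduct, Fin.sum_univ_castSucc, hg_last] using congrFun hg s
  have : g = 0 := funext <| Fin.lastCases hg_last fun i => congrFun hg_castSucc i
  exact sub_eq_zero.1 this

end Matrix

lemma Finset.card_eq_of_forall_exists_mem {ι α : Type*} [Fintype ι] [Fintype α] [DecidableEq α]
    (S : ι → Finset α) (n : ι → ℕ) (hS : ∀ a, ∃ u, a ∈ S u) (hle : ∀ u, #(S u) ≤ n u)
    (hn : ∑ u, n u ≤ Fintype.card α) (u : ι) : #(S u) = n u := by
  have hcover : univ.biUnion S = univ := eq_univ_of_forall fun a => by simpa using hS a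
  have hge : ∑ u, n u ≤ ∑ u, #(S u) :=
    calc ∑ u, n u ≤ Fintype.card α := hn
      _ = #(univ.biUnion S) := by rw [hcover, card_univ]
      _ ≤ ∑ u, #(S u) := card_biUnion_le
  exact (sum_eq_sum_iff_of_le fun u _ => hle u).1
    (le_antisymm (sum_le_sum fun u _ => hle u) hge) u (mem_univ u)

lemma det_map_ofReal {m : Type*} [Fintype m] [DecidableEq m] (A : Matrix m m ℝ) :
    (A.map ((↑) : ℝ → ℂ)).det = A.det :=
  (RingHom.map_det Complex.ofRealHom A).symm

lemma StrictlyTotallyPositive.card_filter_vecMul_eq_zero_lt {p q : ℕ}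
    {T : Matrix (Fin p) (Fin q) ℝ} (hT : StrictlyTotallyPositive T) {y : Fin p → ℂ}
    (hy : y ≠ 0) : #{i | (y ᵥ* T.map (↑)) i = 0} < p := by
  by_contra! h
  obtain ⟨t, ht, ht_card⟩ := exists_subset_card_eq h
  set σ := t.orderEmbOfFin ht_card
  have hdet : ((T.submatrix id σ).map ((↑) : ℝ → ℂ)).det ≠ 0 := by
    rw [det_map_ofReal]
    exact_mod_cast (hT.det_submatrix_pos strictMono_id σ.strictMono).ne'
  refine hy (eq_zero_of_vecMul_eq_zero hdet (funext fun s => ?_))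
  exact (mem_filter.1 (ht (t.orderEmbOfFin_mem ht_card s))).2

def alternatingLift {R : Type*} [Ring R] {n : ℕ} (v : Fin n → R) : Fin (n + 1) → R :=
  fun l => (-1) ^ ((l : ℕ) + 1) * Fin.snoc (α := fun _ => R) v 1 l

lemma alternatingLift_ne_zero {R : Type*} [Ring R] [Nontrivial R] {n : ℕ} (v : Fin n → R) :
    alternatingLift v ≠ 0 := fun h =>
  (isUnit_neg_one.pow _).ne_zero (by simpa [alternatingLift] using congrFun h (Fin.last n))

lemma alternatingLift_vecMul_map_ofReal_apply {n q : ℕ} (T : Matrix (Fin (n + 1)) (Fin q) ℝ)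
    (v : Fin n → ℂ) (i : Fin q) :
    (alternatingLift v ᵥ* T.map (↑)) i =
      (((-1 : ℝ) ^ (n + 1) * T (Fin.last n) i : ℝ) : ℂ) +
        ∑ j : Fin n, (((-1 : ℝ) ^ ((j : ℕ) + 1) * T (Fin.castSucc j) i : ℝ) : ℂ) * v j := by
  simp only [vecMul, dotProduct, alternatingLift, map_apply, Fin.sum_univ_castSucc,
    Fin.val_castSucc, Fin.snoc_castSucc, Fin.val_last, Fin.snoc_last, mul_one, Complex.ofReal_mul,
    Complex.ofReal_pow, Complex.ofReal_neg, Complex.ofReal_one]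
  rw [add_comm]
  congr 1
  exact sum_congr rfl fun _ _ => by ring

lemma StrictlyTotallyPositive.exists_pos_of_alternatingLift_vecMul_eq_zero {n q : ℕ}
    {T : Matrix (Fin (n + 1)) (Fin q) ℝ} (hT : StrictlyTotallyPositive T) {σ : Fin n → Fin q}
    (hσ : StrictMono σ) {v : Fin n → ℂ} (hv : ∀ s, (alternatingLift v ᵥ* T.map (↑)) (σ s) = 0)
    (j : Fin n) : ∃ r : ℝ, 0 < r ∧ v j = r := by
  set M := (T.submatrix id σ).map ((↑) : ℝ → ℂ)
  set D : Fin (n + 1) → ℝ := fun l => (T.submatrix l.succAbove σ).det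
  have hD : ∀ l, 0 < D l := fun l => hT.det_submatrix_pos (Fin.strictMono_succAbove l) hσ
  have hMD : ∀ l, (M.submatrix l.succAbove id).det = D l := fun l => det_map_ofReal _
  have hM_last : (M.submatrix Fin.castSucc id).det = D (Fin.last n) := by
    rw [← Fin.succAbove_last, hMD]
  have hM : (M.submatrix Fin.castSucc id).det ≠ 0 := by
    rw [hM_last]
    exact_mod_cast (hD (Fin.last n)).ne'
  have key := congrFun (smul_eq_smul_signedMaximalMinors hM (x := alternatingLift v) (funext hv))
    j.castSucc
  simp only [signedMaximalMinors, hMD, alternatingLift, Pi.smul_apply, smul_eq_mul,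
    Fin.snoc_castSucc, Fin.snoc_last, Fin.val_last, Fin.val_castSucc, mul_one, pow_succ] at key
  have hvD : v j * D (Fin.last n) = D j.castSucc := by
    refine mul_left_cancel₀ (by simp : (-1 : ℂ) ^ n * (-1) ^ (j : ℕ) * -1 ≠ 0) ?_
    linear_combination key
  refine ⟨D j.castSucc / D (Fin.last n), div_pos (hD _) (hD _), ?_⟩
  rw [Complex.ofReal_div, eq_div_iff (by exact_mod_cast (hD _).ne')]
  exact hvD

theorem stmt13_general (k : ℕ) (dpart : Fin k → ℕ)
    (d : ℕ) (hd : d = ∑ u, dpart u) :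
    ∃ T : (u : Fin k) → Matrix (Fin (dpart u + 1)) (Fin d) ℝ,
      (∀ u, StrictlyTotallyPositive (T u)) ∧
      ∀ v : ((u : Fin k) × Fin (dpart u)) → ℂ, (∀ p, v p ≠ 0) →
        (∀ i : Fin d,
          ∏ u : Fin k,
            ((((-1 : ℝ) ^ (dpart u + 1) * T u (Fin.last (dpart u)) i : ℝ) : ℂ) +
              ∑ j : Fin (dpart u),
                (((-1 : ℝ) ^ ((j : ℕ) + 1) * T u (Fin.castSucc j) i : ℝ) : ℂ) * v ⟨u, j⟩)
            = 0) →
        ∀ p, 0 < (v p).re ∧ (v p).im = 0 := by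
  set T := fun u : Fin k => cauchyMatrix (fun l : Fin (dpart u + 1) => (l : ℝ))
    (fun i : Fin d => (i : ℝ) + 1)
  have hT : ∀ u, StrictlyTotallyPositive (T u) := fun u =>
    strictlyTotallyPositive_cauchyMatrix _ _ (fun _ _ h => by simpa using h)
      (fun _ _ h => by simpa using h) fun _ _ => by positivity
  refine ⟨T, hT, fun v _ hv => ?_⟩
  set y := fun u => alternatingLift fun j => v ⟨u, j⟩
  set S := fun u => ({i | (y u ᵥ* (T u).map (↑)) i = 0} : Finset (Fin d))
  have hS : ∀ i, ∃ u, i ∈ S u := fun i => by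
    obtain ⟨u, -, hu⟩ := prod_eq_zero_iff.1 (hv i)
    exact ⟨u, mem_filter.2 ⟨mem_univ _, by rw [alternatingLift_vecMul_map_ofReal_apply]; exact hu⟩⟩
  have hcard := card_eq_of_forall_exists_mem S dpart hS
    (fun u => Nat.le_of_lt_succ ((hT u).card_filter_vecMul_eq_zero_lt (alternatingLift_ne_zero _)))
    (by simp [hd])
  rintro ⟨u, j⟩
  obtain ⟨r, hr, hvr⟩ := (hT u).exists_pos_of_alternatingLift_vecMul_eq_zero
    ((S u).orderEmbOfFin (hcard u)).strictMono
    (fun s => (mem_filter.1 ((S u).orderEmbOfFin_mem (hcard u) s)).2) j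
  simp [hvr, hr]

theorem stmt13 (k : ℕ) (dpart : Fin k → ℕ) (hpos : ∀ u, 1 ≤ dpart u)
    (d : ℕ) (hd : d = ∑ u, dpart u) :
    ∃ T : (u : Fin k) → Matrix (Fin (dpart u + 1)) (Fin d) ℝ,
      (∀ u, StrictlyTotallyPositive (T u)) ∧
      ∀ v : ((u : Fin k) × Fin (dpart u)) → ℂ, (∀ p, v p ≠ 0) →
        (∀ i : Fin d,
          ∏ u : Fin k,
            ((((-1 : ℝ) ^ (dpart u + 1) * T u (Fin.last (dpart u)) i : ℝ) : ℂ) +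
              ∑ j : Fin (dpart u),
                (((-1 : ℝ) ^ ((j : ℕ) + 1) * T u (Fin.castSucc j) i : ℝ) : ℂ) * v ⟨u, j⟩)
            = 0) →
        ∀ p, 0 < (v p).re ∧ (v p).im = 0 :=
  stmt13_general k dpart d hd
end
end

section
/- Let a_1 < a_2 < ⋯ < a_n be real numbers and let d ≥ 1 with n ≥ d+1. For a (d+1)-subset J = {j_1 < ⋯ < j_{d+1}} of {1,…,n}, let P_J(T) = ∏_{l=1}^{d+1} (T − a_{j_l}). If d is odd, then P_J(a_i) ≥ 0 for all i ∈ {1,…,n} if and only if J is a disjoint union of (d+1)/2 pairs of consecutive integers, i.e., J = {i_1, i_1+1, i_2, i_2+1, …, i_{(d+1)/2}, i_{(d+1)/2}+1} with 1 ≤ i_1, i_l + 1 < i_{l+1} for all l, and i_{(d+1)/2}+1 ≤ n; moreover the number of such subsets J equals the binomial coefficient C(n − (d+1)/2, (d+1)/2). If d is even, then P_J(a_i) ≥ 0 for all i ∈ {1,…,n} if and only if j_1 = 1 and {j_2,…,j_{d+1}} is a disjoint union of d/2 pairs of consecutive integers {i_l, i_l+1} with 1 < i_2, i_l + 1 < i_{l+1},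 and i_{d/2+1}+1 ≤ n; the number of such subsets equals C(n − 1 − d/2, d/2). -/
noncomputable section

attribute [local instance] Classical.propDecidable

/-- `J ⊆ {0,…,n-1}` is a disjoint union of `k` pairs of consecutive integers
`{v l, v l + 1}` with `lo ≤ v l` and `v l + 1 ≤ n - 1`. -/
def IsPairUnion (n k lo : ℕ) (J : Finset (Fin n)) : Prop :=
  ∃ v : Fin k → ℕ,
    (∀ l, lo ≤ v l ∧ v l + 1 ≤ n - 1) ∧
    (∀ l m : Fin k, l < m → v l + 1 < v m) ∧
    (∀ j : Fin n, j ∈ J ↔ ∃ l, (j : ℕ) = v l ∨ (j : ℕ) = v l + 1)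

/-- `J` consists of `0` together with a disjoint union of `k` pairs of consecutive
integers `{v l, v l + 1}` with `1 ≤ v l` and `v l + 1 ≤ n - 1`. -/
def IsZeroAndPairUnion (n k : ℕ) (J : Finset (Fin n)) : Prop :=
  ∃ v : Fin k → ℕ,
    (∀ l, 1 ≤ v l ∧ v l + 1 ≤ n - 1) ∧
    (∀ l m : Fin k, l < m → v l + 1 < v m) ∧
    (∀ j : Fin n, j ∈ J ↔ ((j : ℕ) = 0 ∨ ∃ l, (j : ℕ) = v l ∨ (j : ℕ) = v l + 1))

namespace Stmt15Aux

open Finset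

/-- A strict mono map between `Fin`s grows at least linearly. -/
lemma strictMono_add_le {p q : ℕ} {f : Fin p → Fin q} (hf : StrictMono f) :
    ∀ t (x y : Fin p), (y : ℕ) = (x : ℕ) + t → (f x : ℕ) + t ≤ (f y : ℕ) := by
  intro t
  induction t with
  | zero =>
      intro x y h
      have : x = y := Fin.ext (by omega)
      subst this; omega
  | succ t ih =>
      intro x y h
      have hy' : (x : ℕ) + t < p := by have := y.2; omega
      have h1 := ih x ⟨(x : ℕ) + t, hy'⟩ rfl
      have h2 : (⟨(x : ℕ) + t, hy'⟩ : Fin p) < y := by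
        rw [Fin.lt_def]; simp; omega
      have h3 := hf h2
      rw [Fin.lt_def] at h3
      simp at h1 h3
      omega

lemma vgap {k : ℕ} {v : Fin k → ℕ} (hsep : ∀ l m : Fin k, l < m → v l + 1 < v m) :
    ∀ t (l m : Fin k), (m : ℕ) = (l : ℕ) + t → v l + 2 * t ≤ v m := by
  intro t
  induction t with
  | zero =>
      intro l m h
      have : l = m := Fin.ext (by omega)
      subst this; omega
  | succ t ih =>
      intro l m h
      have hm' : (l : ℕ) + t < k := by have := m.2; omega
      have h1 := ih l ⟨(l : ℕ) + t, hm'⟩ rfl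
      have h2 := hsep ⟨(l : ℕ) + t, hm'⟩ m (by rw [Fin.lt_def]; simp; omega)
      omega

/-- Sign of the product `∏_{j ∈ J} (a i - a j)` for `i ∉ J`. -/
lemma sign_iff {n : ℕ} {a : Fin n → ℝ} (ha : StrictMono a) {J : Finset (Fin n)} {i : Fin n}
    (hi : i ∉ J) :
    (0 ≤ ∏ j ∈ J, (a i - a j)) ↔ Even (J.filter (fun j => i < j)).card := by
  have hsplit : (∏ j ∈ J, (a i - a j)) =
      (∏ j ∈ J.filter (fun j => i < j), (a i - a j)) *
      (∏ j ∈ J.filter (fun j => ¬ i < j), (a i - a j)) :=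
    (Finset.prod_filter_mul_prod_filter_not J _ _).symm
  have hpos2 : 0 < ∏ j ∈ J.filter (fun j => ¬ i < j), (a i - a j) := by
    apply Finset.prod_pos
    intro j hj
    rw [Finset.mem_filter] at hj
    have hji : j < i := lt_of_le_of_ne (not_lt.1 hj.2) (by rintro rfl; exact hi hj.1)
    have := ha hji
    linarith
  have hpos1 : 0 < ∏ j ∈ J.filter (fun j => i < j), (a j - a i) := by
    apply Finset.prod_pos
    intro j hj
    rw [Finset.mem_filter] at hj
    have := ha hj.2
    linarith
  have hneg : (∏ j ∈ J.filter (fun j => i < j), (a i - a j)) =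
      (-1) ^ (J.filter (fun j => i < j)).card *
        ∏ j ∈ J.filter (fun j => i < j), (a j - a i) := by
    rw [← Finset.prod_const, ← Finset.prod_mul_distrib]
    apply Finset.prod_congr rfl
    intro j _
    ring
  rw [hsplit, hneg]
  rcases Nat.even_or_odd (J.filter (fun j => i < j)).card with he | ho
  · simp only [he, iff_true]
    rw [he.neg_one_pow]
    nlinarith
  · simp only [(Nat.not_even_iff_odd).2 ho, iff_false, not_le]
    rw [ho.neg_one_pow]
    nlinarith

/-- If `J` has cardinality `2k` and is a union of pairs `{v l, v l + 1}`, then the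
monotone enumeration of `J` is `m ↦ v (m / 2) + m % 2`. -/
lemma enum_pairs {n k : ℕ} (hk : 0 < k) {J : Finset (Fin n)} (hJ : J.card = 2 * k)
    {v : Fin k → ℕ}
    (hbd : ∀ l, v l + 1 ≤ n - 1)
    (hsep : ∀ l m : Fin k, l < m → v l + 1 < v m)
    (hmem : ∀ j : Fin n, j ∈ J ↔ ∃ l, (j : ℕ) = v l ∨ (j : ℕ) = v l + 1) :
    ∀ (l : Fin k) (m : Fin (2 * k)),
      ((m : ℕ) = 2 * (l : ℕ) → (J.orderEmbOfFin hJ m : ℕ) = v l) ∧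
      ((m : ℕ) = 2 * (l : ℕ) + 1 → (J.orderEmbOfFin hJ m : ℕ) = v l + 1) := by
  have hn2 : 2 ≤ n := by have := hbd ⟨0, hk⟩; omega
  set g : Fin (2 * k) → Fin n := fun m =>
    ⟨v ⟨(m : ℕ) / 2, by have := m.2; omega⟩ + (m : ℕ) % 2, by
      have := hbd ⟨(m : ℕ) / 2, by have := m.2; omega⟩
      have : (m : ℕ) % 2 < 2 := Nat.mod_lt _ (by norm_num)
      omega⟩ with hg
  have hgmono : StrictMono g := by
    intro m m' hmm'
    rw [Fin.lt_def] at hmm' ⊢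
    simp only [hg]
    rcases Nat.lt_or_ge ((m : ℕ) / 2) ((m' : ℕ) / 2) with hq | hq
    · have hs := hsep ⟨(m : ℕ) / 2, by have := m.2; omega⟩ ⟨(m' : ℕ) / 2, by have := m'.2; omega⟩
        (by rw [Fin.lt_def]; simpa using hq)
      have hm2 : (m : ℕ) % 2 < 2 := Nat.mod_lt _ (by norm_num)
      omega
    · have hq2 : (m : ℕ) / 2 = (m' : ℕ) / 2 := by omega
      have : (⟨(m : ℕ) / 2, by have := m.2; omega⟩ : Fin k)
          = ⟨(m' : ℕ) / 2, by have := m'.2; omega⟩ := Fin.ext (by simpa using hq2)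
      rw [this]
      omega
  have hgmem : ∀ m, g m ∈ J := by
    intro m
    rw [hmem]
    refine ⟨⟨(m : ℕ) / 2, by have := m.2; omega⟩, ?_⟩
    rcases Nat.mod_two_eq_zero_or_one (m : ℕ) with h | h
    · left; simp [hg, h]
    · right; simp [hg, h]
  have heq := Finset.orderEmbOfFin_unique hJ hgmem hgmono
  intro l m
  have pfm : (m : ℕ) / 2 < k := by have := m.2; omega
  have hval : ((J.orderEmbOfFin hJ) m : ℕ) = v ⟨(m : ℕ) / 2, pfm⟩ + (m : ℕ) % 2 := by
    rw [← heq]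
  constructor
  · intro hm
    have hidx : (⟨(m : ℕ) / 2, pfm⟩ : Fin k) = l :=
      Fin.ext (show (m : ℕ) / 2 = (l : ℕ) by omega)
    rw [hval, hidx]
    omega
  · intro hm
    have hidx : (⟨(m : ℕ) / 2, pfm⟩ : Fin k) = l :=
      Fin.ext (show (m : ℕ) / 2 = (l : ℕ) by omega)
    rw [hval, hidx]
    omega

/-- If `J` has cardinality `2k+1` and consists of `0` and a union of pairs
`{v l, v l + 1}` with `v l ≥ 1`, then the monotone enumeration of `J` sends `0` to `0`
and `m + 1` to `v (m / 2) + m % 2`. -/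
lemma enum_zero_pairs {n k : ℕ} (hk : 0 < k) {J : Finset (Fin n)} (hJ : J.card = 2 * k + 1)
    {v : Fin k → ℕ}
    (hlo : ∀ l, 1 ≤ v l)
    (hbd : ∀ l, v l + 1 ≤ n - 1)
    (hsep : ∀ l m : Fin k, l < m → v l + 1 < v m)
    (hmem : ∀ j : Fin n, j ∈ J ↔ ((j : ℕ) = 0 ∨ ∃ l, (j : ℕ) = v l ∨ (j : ℕ) = v l + 1)) :
    ∀ (l : Fin k) (m : Fin (2 * k + 1)),
      ((m : ℕ) = 2 * (l : ℕ) + 1 → (J.orderEmbOfFin hJ m : ℕ) = v l) ∧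
      ((m : ℕ) = 2 * (l : ℕ) + 2 → (J.orderEmbOfFin hJ m : ℕ) = v l + 1) := by
  have hn2 : 2 ≤ n := by have := hbd ⟨0, hk⟩; omega
  set g : Fin (2 * k + 1) → Fin n := fun m =>
    ⟨if (m : ℕ) = 0 then 0 else
        v ⟨((m : ℕ) - 1) / 2, by have := m.2; omega⟩ + ((m : ℕ) - 1) % 2, by
      split
      · omega
      · have := hbd ⟨((m : ℕ) - 1) / 2, by have := m.2; omega⟩
        have : ((m : ℕ) - 1) % 2 < 2 := Nat.mod_lt _ (by norm_num)
        omega⟩ with hg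
  have hgmono : StrictMono g := by
    intro m m' hmm'
    rw [Fin.lt_def] at hmm' ⊢
    simp only [hg]
    rcases Nat.eq_zero_or_pos (m : ℕ) with h0 | h0
    · have h0' : (m' : ℕ) ≠ 0 := by omega
      rw [if_pos h0, if_neg h0']
      have := hlo ⟨((m' : ℕ) - 1) / 2, by have := m'.2; omega⟩
      omega
    · have h0m : (m : ℕ) ≠ 0 := by omega
      have h0' : (m' : ℕ) ≠ 0 := by omega
      rw [if_neg h0m, if_neg h0']
      rcases Nat.lt_or_ge (((m : ℕ) - 1) / 2) (((m' : ℕ) - 1) / 2) with hq | hq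
      · have hs := hsep ⟨((m : ℕ) - 1) / 2, by have := m.2; omega⟩
          ⟨((m' : ℕ) - 1) / 2, by have := m'.2; omega⟩
          (by rw [Fin.lt_def]; simpa using hq)
        have : ((m : ℕ) - 1) % 2 < 2 := Nat.mod_lt _ (by norm_num)
        omega
      · have hq2 : ((m : ℕ) - 1) / 2 = ((m' : ℕ) - 1) / 2 := by omega
        have heq : (⟨((m : ℕ) - 1) / 2, by have := m.2; omega⟩ : Fin k)
            = ⟨((m' : ℕ) - 1) / 2, by have := m'.2; omega⟩ := Fin.ext (by simpa using hq2)
        rw [heq]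
        omega
  have hgval : ∀ m : Fin (2 * k + 1), (g m : ℕ) = if (m : ℕ) = 0 then 0 else
      v ⟨((m : ℕ) - 1) / 2, by have := m.2; omega⟩ + ((m : ℕ) - 1) % 2 := fun _ => rfl
  have hgmem : ∀ m, g m ∈ J := by
    intro m
    rw [hmem]
    rcases Nat.eq_zero_or_pos (m : ℕ) with h0 | h0
    · left; rw [hgval, if_pos h0]
    · right
      refine ⟨⟨((m : ℕ) - 1) / 2, by have := m.2; omega⟩, ?_⟩
      rcases Nat.mod_two_eq_zero_or_one ((m : ℕ) - 1) with h | h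
      · left; rw [hgval, if_neg (by omega), h, Nat.add_zero]
      · right; rw [hgval, if_neg (by omega), h]
  have heq := Finset.orderEmbOfFin_unique hJ hgmem hgmono
  intro l m
  have pfm : ((m : ℕ) - 1) / 2 < k := by have := m.2; omega
  have hval : ((J.orderEmbOfFin hJ) m : ℕ) = if (m : ℕ) = 0 then 0 else
      v ⟨((m : ℕ) - 1) / 2, pfm⟩ + ((m : ℕ) - 1) % 2 := by
    rw [← heq]
  constructor
  · intro hm
    have hidx : (⟨((m : ℕ) - 1) / 2, pfm⟩ : Fin k) = l :=
      Fin.ext (show ((m : ℕ) - 1) / 2 = (l : ℕ) by omega)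
    rw [hval, if_neg (by omega), hidx]
    omega
  · intro hm
    have hidx : (⟨((m : ℕ) - 1) / 2, pfm⟩ : Fin k) = l :=
      Fin.ext (show ((m : ℕ) - 1) / 2 = (l : ℕ) by omega)
    rw [hval, if_neg (by omega), hidx]
    omega

/-- The union of the pairs `{v l, v l + 1}` as a finset of `Fin n`. -/
def pairJ (n : ℕ) {k : ℕ} (v : Fin k → ℕ) : Finset (Fin n) :=
  Finset.univ.filter (fun j => ∃ l, (j : ℕ) = v l ∨ (j : ℕ) = v l + 1)

/-- `{0}` together with the union of the pairs `{v l, v l + 1}`. -/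
def zpairJ (n : ℕ) {k : ℕ} (v : Fin k → ℕ) : Finset (Fin n) :=
  Finset.univ.filter (fun j => (j : ℕ) = 0 ∨ ∃ l, (j : ℕ) = v l ∨ (j : ℕ) = v l + 1)

lemma mem_pairJ {n k : ℕ} {v : Fin k → ℕ} (j : Fin n) :
    j ∈ pairJ n v ↔ ∃ l, (j : ℕ) = v l ∨ (j : ℕ) = v l + 1 := by
  simp [pairJ]

lemma mem_zpairJ {n k : ℕ} {v : Fin k → ℕ} (j : Fin n) :
    j ∈ zpairJ n v ↔ ((j : ℕ) = 0 ∨ ∃ l, (j : ℕ) = v l ∨ (j : ℕ) = v l + 1) := by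
  simp [zpairJ]

lemma pairJ_spec {n k : ℕ} (hk : 0 < k) {v : Fin k → ℕ}
    (hbd : ∀ l, v l + 1 ≤ n - 1)
    (hsep : ∀ l m : Fin k, l < m → v l + 1 < v m) :
    (pairJ n v).card = 2 * k ∧
    ∀ i : Fin n, i ∉ pairJ n v → Even ((pairJ n v).filter (fun j => i < j)).card := by
  have hn2 : 2 ≤ n := by have := hbd ⟨0, hk⟩; omega
  have hcond : ∀ b : Bool, (cond b 1 0 : ℕ) ≤ 1 := by intro b; cases b <;> simp
  set F : Fin k × Bool → Fin n := fun p =>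
    ⟨v p.1 + cond p.2 1 0, by have := hbd p.1; have := hcond p.2; omega⟩ with hF
  have hFval : ∀ p, (F p : ℕ) = v p.1 + cond p.2 1 0 := fun _ => rfl
  have hFinj : Function.Injective F := by
    intro p q hpq
    have hval : v p.1 + cond p.2 1 0 = v q.1 + cond q.2 1 0 := by
      have := congrArg Fin.val hpq; simpa [hFval] using this
    have h1 : p.1 = q.1 := by
      rcases lt_trichotomy p.1 q.1 with h | h | h
      · have := hsep _ _ h; have := hcond p.2; have := hcond q.2; omega
      · exact h
      · have := hsep _ _ h; have := hcond p.2; have := hcond q.2; omega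
    have h2 : p.2 = q.2 := by
      rw [h1] at hval
      cases hp : p.2 <;> cases hq : q.2 <;> simp [hp, hq] at hval ⊢ <;> omega
    exact Prod.ext h1 h2
  have hFimage : pairJ n v = Finset.image F Finset.univ := by
    ext j
    rw [mem_pairJ, Finset.mem_image]
    constructor
    · rintro ⟨l, h | h⟩
      · exact ⟨(l, false), Finset.mem_univ _, Fin.ext (by simp [hFval, h])⟩
      · exact ⟨(l, true), Finset.mem_univ _, Fin.ext (by simp [hFval, h])⟩
    · rintro ⟨⟨l, b⟩, -, rfl⟩
      cases b
      · exact ⟨l, Or.inl (by simp [hFval])⟩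
      · exact ⟨l, Or.inr (by simp [hFval])⟩
  constructor
  · rw [hFimage, Finset.card_image_of_injective _ hFinj, Finset.card_univ]
    simp [Fintype.card_prod]
    omega
  · intro i hi
    have hne : ∀ l, (i : ℕ) ≠ v l ∧ (i : ℕ) ≠ v l + 1 := by
      intro l
      constructor <;> intro h <;> exact hi ((mem_pairJ i).2 ⟨l, by omega⟩)
    have hfilt : (pairJ n v).filter (fun j => i < j)
        = Finset.image F (Finset.univ.filter (fun p => i < F p)) := by
      rw [hFimage, Finset.filter_image]
    have hfilt2 : (Finset.univ.filter (fun p : Fin k × Bool => i < F p))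
        = (Finset.univ.filter (fun l => (i : ℕ) < v l)) ×ˢ Finset.univ := by
      ext ⟨l, b⟩
      simp only [Finset.mem_filter, Finset.mem_product, Finset.mem_univ, true_and, and_true]
      rw [Fin.lt_def, hFval]
      have := hne l
      cases b <;> simp <;> omega
    rw [hfilt, Finset.card_image_of_injective _ hFinj, hfilt2, Finset.card_product,
      Finset.card_univ]
    exact ⟨(Finset.univ.filter (fun l => (i : ℕ) < v l)).card, by simp; ring⟩

lemma zpairJ_spec {n k : ℕ} (hk : 0 < k) {v : Fin k → ℕ}
    (hlo : ∀ l, 1 ≤ v l)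
    (hbd : ∀ l, v l + 1 ≤ n - 1)
    (hsep : ∀ l m : Fin k, l < m → v l + 1 < v m) :
    (zpairJ n v).card = 2 * k + 1 ∧
    ∀ i : Fin n, i ∉ zpairJ n v → Even ((zpairJ n v).filter (fun j => i < j)).card := by
  have hn2 : 2 ≤ n := by have := hbd ⟨0, hk⟩; omega
  have hcond : ∀ b : Bool, (cond b 1 0 : ℕ) ≤ 1 := by intro b; cases b <;> simp
  set z : Fin n := ⟨0, by omega⟩ with hz
  set F : Fin k × Bool → Fin n := fun p =>
    ⟨v p.1 + cond p.2 1 0, by have := hbd p.1; have := hcond p.2; omega⟩ with hF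
  have hFval : ∀ p, (F p : ℕ) = v p.1 + cond p.2 1 0 := fun _ => rfl
  have hFinj : Function.Injective F := by
    intro p q hpq
    have hval : v p.1 + cond p.2 1 0 = v q.1 + cond q.2 1 0 := by
      have := congrArg Fin.val hpq; simpa [hFval] using this
    have h1 : p.1 = q.1 := by
      rcases lt_trichotomy p.1 q.1 with h | h | h
      · have := hsep _ _ h; have := hcond p.2; have := hcond q.2; omega
      · exact h
      · have := hsep _ _ h; have := hcond p.2; have := hcond q.2; omega
    have h2 : p.2 = q.2 := by
      rw [h1] at hval
      cases hp : p.2 <;> cases hq : q.2 <;> simp [hp, hq] at hval ⊢ <;> omega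
    exact Prod.ext h1 h2
  have hznot : z ∉ Finset.image F Finset.univ := by
    rw [Finset.mem_image]
    rintro ⟨p, -, hp⟩
    have h1 := congrArg Fin.val hp
    rw [hFval] at h1
    have h2 := hlo p.1
    simp [hz] at h1
    omega
  have hFimage : zpairJ n v = insert z (Finset.image F Finset.univ) := by
    ext j
    rw [mem_zpairJ, Finset.mem_insert, Finset.mem_image]
    constructor
    · rintro (h | ⟨l, h | h⟩)
      · exact Or.inl (Fin.ext (by simpa [hz] using h))
      · exact Or.inr ⟨(l, false), Finset.mem_univ _, Fin.ext (by simp [hFval, h])⟩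
      · exact Or.inr ⟨(l, true), Finset.mem_univ _, Fin.ext (by simp [hFval, h])⟩
    · rintro (rfl | ⟨⟨l, b⟩, -, rfl⟩)
      · exact Or.inl rfl
      · cases b
        · exact Or.inr ⟨l, Or.inl (by simp [hFval])⟩
        · exact Or.inr ⟨l, Or.inr (by simp [hFval])⟩
  constructor
  · rw [hFimage, Finset.card_insert_of_notMem hznot,
      Finset.card_image_of_injective _ hFinj, Finset.card_univ]
    simp [Fintype.card_prod]
    omega
  · intro i hi
    have hne : ∀ l, (i : ℕ) ≠ v l ∧ (i : ℕ) ≠ v l + 1 := by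
      intro l
      constructor <;> intro h <;> exact hi ((mem_zpairJ i).2 (Or.inr ⟨l, by omega⟩))
    have hnotz : ¬ i < z := by rw [Fin.lt_def]; simp [hz]
    have hfilt : (zpairJ n v).filter (fun j => i < j)
        = Finset.image F (Finset.univ.filter (fun p => i < F p)) := by
      rw [hFimage, Finset.filter_insert, if_neg hnotz, Finset.filter_image]
    have hfilt2 : (Finset.univ.filter (fun p : Fin k × Bool => i < F p))
        = (Finset.univ.filter (fun l => (i : ℕ) < v l)) ×ˢ Finset.univ := by
      ext ⟨l, b⟩
      simp only [Finset.mem_filter, Finset.mem_product, Finset.mem_univ, true_and, and_true]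
      rw [Fin.lt_def, hFval]
      have := hne l
      cases b <;> simp <;> omega
    rw [hfilt, Finset.card_image_of_injective _ hFinj, hfilt2, Finset.card_product,
      Finset.card_univ]
    exact ⟨(Finset.univ.filter (fun l => (i : ℕ) < v l)).card, by simp; ring⟩

set_option maxHeartbeats 1000000 in
lemma char_pair {n k : ℕ} (hk : 0 < k) {a : Fin n → ℝ} (ha : StrictMono a)
    {J : Finset (Fin n)} (hJ : J.card = 2 * k) :
    (∀ i, 0 ≤ ∏ j ∈ J, (a i - a j)) ↔ IsPairUnion n k 0 J := by
  constructor
  · intro h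
    set e := J.orderEmbOfFin hJ with he
    have hes : StrictMono e := (J.orderEmbOfFin hJ).strictMono
    have hmemJ : ∀ j ∈ J, ∃ m, e m = j := by
      intro j hj
      have : j ∈ Set.range e := by rw [he, Finset.range_orderEmbOfFin]; exact hj
      exact this
    have heJ : ∀ m, e m ∈ J := fun m => J.orderEmbOfFin_mem hJ m
    have hcnt : ∀ m : Fin (2 * k),
        (J.filter (fun j => e m < j)).card = 2 * k - 1 - (m : ℕ) := by
      intro m
      have himg : J.filter (fun j => e m < j) = Finset.image e (Finset.Ioi m) := by
        ext j
        rw [Finset.mem_filter, Finset.mem_image]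
        constructor
        · rintro ⟨hjJ, hlt⟩
          obtain ⟨t, rfl⟩ := hmemJ j hjJ
          exact ⟨t, Finset.mem_Ioi.2 (hes.lt_iff_lt.1 hlt), rfl⟩
        · rintro ⟨t, ht, rfl⟩
          exact ⟨heJ t, hes (Finset.mem_Ioi.1 ht)⟩
      rw [himg, Finset.card_image_of_injective _ hes.injective, Fin.card_Ioi]
    have hgap : ∀ m m' : Fin (2 * k), (m : ℕ) + 1 = (m' : ℕ) →
        ¬ Even (2 * k - 1 - (m : ℕ)) → (e m' : ℕ) = (e m : ℕ) + 1 := by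
      intro m m' hmm' hodd
      by_contra hne
      have hlt : (e m : ℕ) + 1 < (e m' : ℕ) := by
        have h1 := hes (show m < m' from by rw [Fin.lt_def]; omega)
        rw [Fin.lt_def] at h1
        omega
      set i : Fin n := ⟨(e m : ℕ) + 1, by have := (e m').2; omega⟩ with hi
      have hiJ : i ∉ J := by
        intro hmem
        obtain ⟨t, ht⟩ := hmemJ i hmem
        have h1 : m < t := by
          rw [← hes.lt_iff_lt, ht, Fin.lt_def, hi]
          simp
        have h2 : m' ≤ t := by rw [Fin.le_def]; rw [Fin.lt_def] at h1; omega
        have h3 := hes.le_iff_le.2 h2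
        rw [ht, Fin.le_def, hi] at h3
        simp at h3
        omega
      have heven := (sign_iff ha hiJ).1 (h i)
      have hfeq : J.filter (fun j => i < j) = J.filter (fun j => e m < j) := by
        apply Finset.filter_congr
        intro j hj
        simp only [Fin.lt_def, hi]
        constructor
        · intro hh; omega
        · intro hh
          obtain ⟨t, rfl⟩ := hmemJ j hj
          have h1 : m < t := hes.lt_iff_lt.1 (by rw [Fin.lt_def]; exact hh)
          have h2 : m' ≤ t := by rw [Fin.le_def]; rw [Fin.lt_def] at h1; omega
          have h3 := hes.le_iff_le.2 h2
          rw [Fin.le_def] at h3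
          simp
          omega
      rw [hfeq, hcnt m] at heven
      exact hodd heven
    have hpair : ∀ l : Fin k,
        (e ⟨2 * (l : ℕ) + 1, by have := l.2; omega⟩ : ℕ)
          = (e ⟨2 * (l : ℕ), by have := l.2; omega⟩ : ℕ) + 1 := by
      intro l
      refine hgap ⟨2 * (l : ℕ), by have := l.2; omega⟩
        ⟨2 * (l : ℕ) + 1, by have := l.2; omega⟩ rfl ?_
      intro hE
      rw [Nat.even_iff] at hE
      have hE' : (2 * k - 1 - 2 * (l : ℕ)) % 2 = 0 := hE
      have := l.2
      omega
    refine ⟨fun l => (e ⟨2 * (l : ℕ), by have := l.2; omega⟩ : ℕ), ?_, ?_, ?_⟩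
    · intro l
      beta_reduce
      refine ⟨Nat.zero_le _, ?_⟩
      have h1 := hpair l
      have h2 := (e ⟨2 * (l : ℕ) + 1, by have := l.2; omega⟩).2
      omega
    · intro l m hlm
      beta_reduce
      have h1 := hpair l
      have h2 : e ⟨2 * (l : ℕ) + 1, by have := l.2; omega⟩
          < e ⟨2 * (m : ℕ), by have := m.2; omega⟩ := by
        apply hes
        rw [Fin.lt_def] at hlm ⊢
        simp
        omega
      rw [Fin.lt_def] at h2
      omega
    · intro j
      beta_reduce
      constructor
      · intro hj
        obtain ⟨m, rfl⟩ := hmemJ j hj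
        refine ⟨⟨(m : ℕ) / 2, by have := m.2; omega⟩, ?_⟩
        rcases Nat.mod_two_eq_zero_or_one (m : ℕ) with hm | hm
        · left
          have hidx : m = ⟨2 * ((m : ℕ) / 2), by have := m.2; omega⟩ :=
            Fin.ext (show (m : ℕ) = 2 * ((m : ℕ) / 2) by omega)
          exact congrArg (fun t => ((e t : Fin n) : ℕ)) hidx
        · right
          have hidx : m = ⟨2 * ((m : ℕ) / 2) + 1, by have := m.2; omega⟩ :=
            Fin.ext (show (m : ℕ) = 2 * ((m : ℕ) / 2) + 1 by omega)
          have h1 := congrArg (fun t => ((e t : Fin n) : ℕ)) hidx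
          have h2 := hpair ⟨(m : ℕ) / 2, by have := m.2; omega⟩
          simp only at h1 h2
          rw [h1]
          exact h2
      · rintro ⟨l, hl | hl⟩
        · have : j = e ⟨2 * (l : ℕ), by have := l.2; omega⟩ := Fin.ext hl
          rw [this]; exact heJ _
        · have h2 := hpair l
          have : j = e ⟨2 * (l : ℕ) + 1, by have := l.2; omega⟩ := Fin.ext (by omega)
          rw [this]; exact heJ _
  · rintro ⟨v, hcon, hsep, hmem⟩ i
    have hJeq : J = pairJ n v := by
      ext j; rw [mem_pairJ]; exact hmem j
    by_cases hi : i ∈ J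
    · exact le_of_eq (Finset.prod_eq_zero hi (by simp)).symm
    · rw [sign_iff ha hi]
      rw [hJeq] at hi ⊢
      exact (pairJ_spec hk (fun l => (hcon l).2) hsep).2 i hi

set_option maxHeartbeats 1000000 in
lemma char_zpair {n k : ℕ} (hk : 0 < k) (hn : 2 * k + 1 ≤ n) {a : Fin n → ℝ}
    (ha : StrictMono a) {J : Finset (Fin n)} (hJ : J.card = 2 * k + 1) :
    (∀ i, 0 ≤ ∏ j ∈ J, (a i - a j)) ↔ IsZeroAndPairUnion n k J := by
  have hn0 : 0 < n := by omega
  have h0idx : (0 : ℕ) < 2 * k + 1 := by omega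
  have hi1 : ∀ l : Fin k, 2 * (l : ℕ) + 1 < 2 * k + 1 := fun l => by have := l.2; omega
  have hi2 : ∀ l : Fin k, 2 * (l : ℕ) + 2 < 2 * k + 1 := fun l => by have := l.2; omega
  constructor
  · intro h
    set e := J.orderEmbOfFin hJ with he
    have hes : StrictMono e := (J.orderEmbOfFin hJ).strictMono
    have hmemJ : ∀ j ∈ J, ∃ m, e m = j := by
      intro j hj
      have : j ∈ Set.range e := by rw [he, Finset.range_orderEmbOfFin]; exact hj
      exact this
    have heJ : ∀ m, e m ∈ J := fun m => J.orderEmbOfFin_mem hJ m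
    have hcnt : ∀ m : Fin (2 * k + 1),
        (J.filter (fun j => e m < j)).card = 2 * k + 1 - 1 - (m : ℕ) := by
      intro m
      have himg : J.filter (fun j => e m < j) = Finset.image e (Finset.Ioi m) := by
        ext j
        rw [Finset.mem_filter, Finset.mem_image]
        constructor
        · rintro ⟨hjJ, hlt⟩
          obtain ⟨t, rfl⟩ := hmemJ j hjJ
          exact ⟨t, Finset.mem_Ioi.2 (hes.lt_iff_lt.1 hlt), rfl⟩
        · rintro ⟨t, ht, rfl⟩
          exact ⟨heJ t, hes (Finset.mem_Ioi.1 ht)⟩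
      rw [himg, Finset.card_image_of_injective _ hes.injective, Fin.card_Ioi]
    have hgap : ∀ m m' : Fin (2 * k + 1), (m : ℕ) + 1 = (m' : ℕ) →
        ¬ Even (2 * k + 1 - 1 - (m : ℕ)) → (e m' : ℕ) = (e m : ℕ) + 1 := by
      intro m m' hmm' hodd
      by_contra hne
      have hlt : (e m : ℕ) + 1 < (e m' : ℕ) := by
        have h1 := hes (show m < m' from by rw [Fin.lt_def]; omega)
        rw [Fin.lt_def] at h1
        omega
      set i : Fin n := ⟨(e m : ℕ) + 1, by have := (e m').2; omega⟩ with hi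
      have hiJ : i ∉ J := by
        intro hmem
        obtain ⟨t, ht⟩ := hmemJ i hmem
        have h1 : m < t := by
          rw [← hes.lt_iff_lt, ht, Fin.lt_def, hi]
          simp
        have h2 : m' ≤ t := by rw [Fin.le_def]; rw [Fin.lt_def] at h1; omega
        have h3 := hes.le_iff_le.2 h2
        rw [ht, Fin.le_def, hi] at h3
        simp at h3
        omega
      have heven := (sign_iff ha hiJ).1 (h i)
      have hfeq : J.filter (fun j => i < j) = J.filter (fun j => e m < j) := by
        apply Finset.filter_congr
        intro j hj
        simp only [Fin.lt_def, hi]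
        constructor
        · intro hh; omega
        · intro hh
          obtain ⟨t, rfl⟩ := hmemJ j hj
          have h1 : m < t := hes.lt_iff_lt.1 (by rw [Fin.lt_def]; exact hh)
          have h2 : m' ≤ t := by rw [Fin.le_def]; rw [Fin.lt_def] at h1; omega
          have h3 := hes.le_iff_le.2 h2
          rw [Fin.le_def] at h3
          simp
          omega
      rw [hfeq, hcnt m] at heven
      exact hodd heven
    have hz : (e ⟨0, h0idx⟩ : ℕ) = 0 := by
      by_contra hz0
      set i : Fin n := ⟨0, hn0⟩ with hi
      have hiJ : i ∉ J := by
        intro hmem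
        obtain ⟨t, ht⟩ := hmemJ i hmem
        have h2 : e ⟨0, h0idx⟩ ≤ e t :=
          hes.monotone (by rw [Fin.le_def]; simp)
        rw [Fin.le_def] at h2
        have h3 : ((e t : Fin n) : ℕ) = 0 := by rw [ht, hi]
        exact hz0 (by omega)
      have heven := (sign_iff ha hiJ).1 (h i)
      have hfeq : J.filter (fun j => i < j) = J := by
        apply Finset.filter_true_of_mem
        intro j hj
        obtain ⟨t, rfl⟩ := hmemJ j hj
        rw [Fin.lt_def, hi]
        have h2 : e ⟨0, h0idx⟩ ≤ e t :=
          hes.monotone (by rw [Fin.le_def]; simp)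
        rw [Fin.le_def] at h2
        simp only [Fin.val_mk]
        omega
      rw [hfeq, hJ, Nat.even_iff] at heven
      omega
    have hpair : ∀ l : Fin k,
        (e ⟨2 * (l : ℕ) + 2, hi2 l⟩ : ℕ) = (e ⟨2 * (l : ℕ) + 1, hi1 l⟩ : ℕ) + 1 := by
      intro l
      refine hgap ⟨2 * (l : ℕ) + 1, hi1 l⟩ ⟨2 * (l : ℕ) + 2, hi2 l⟩ rfl ?_
      intro hE
      rw [Nat.even_iff] at hE
      have hE' : (2 * k + 1 - 1 - (2 * (l : ℕ) + 1)) % 2 = 0 := hE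
      have := l.2
      omega
    refine ⟨fun l => (e ⟨2 * (l : ℕ) + 1, hi1 l⟩ : ℕ), ?_, ?_, ?_⟩
    · intro l
      beta_reduce
      constructor
      · have h1 : e ⟨0, h0idx⟩ < e ⟨2 * (l : ℕ) + 1, hi1 l⟩ := by
          apply hes
          rw [Fin.lt_def]
          simp
        rw [Fin.lt_def] at h1
        omega
      · have h1 := hpair l
        have h2 := (e ⟨2 * (l : ℕ) + 2, hi2 l⟩).2
        omega
    · intro l m hlm
      beta_reduce
      have h1 := hpair l
      have h2 : e ⟨2 * (l : ℕ) + 2, hi2 l⟩ < e ⟨2 * (m : ℕ) + 1, hi1 m⟩ := by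
        apply hes
        rw [Fin.lt_def] at hlm ⊢
        simp only [Fin.val_mk]
        omega
      rw [Fin.lt_def] at h2
      omega
    · intro j
      beta_reduce
      constructor
      · intro hj
        obtain ⟨m, rfl⟩ := hmemJ j hj
        rcases Nat.eq_zero_or_pos (m : ℕ) with hm0 | hm0
        · left
          have hidx : m = ⟨0, h0idx⟩ := Fin.ext hm0
          exact (congrArg (fun t => ((e t : Fin n) : ℕ)) hidx).trans hz
        · right
          set l0 : Fin k := ⟨((m : ℕ) - 1) / 2, by have := m.2; omega⟩ with hl0
          refine ⟨l0, ?_⟩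
          rcases Nat.mod_two_eq_zero_or_one ((m : ℕ) - 1) with hm | hm
          · left
            have hidx : m = ⟨2 * (l0 : ℕ) + 1, hi1 l0⟩ :=
              Fin.ext (show (m : ℕ) = 2 * (((m : ℕ) - 1) / 2) + 1 by omega)
            exact congrArg (fun t => ((e t : Fin n) : ℕ)) hidx
          · right
            have hidx : m = ⟨2 * (l0 : ℕ) + 2, hi2 l0⟩ :=
              Fin.ext (show (m : ℕ) = 2 * (((m : ℕ) - 1) / 2) + 2 by omega)
            exact (congrArg (fun t => ((e t : Fin n) : ℕ)) hidx).trans (hpair l0)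
      · rintro (hl | ⟨l, hl | hl⟩)
        · have hje : j = e ⟨0, h0idx⟩ := Fin.ext (hl.trans hz.symm)
          rw [hje]; exact heJ _
        · have hje : j = e ⟨2 * (l : ℕ) + 1, hi1 l⟩ := Fin.ext hl
          rw [hje]; exact heJ _
        · have h2 := hpair l
          have hje : j = e ⟨2 * (l : ℕ) + 2, hi2 l⟩ := Fin.ext (by omega)
          rw [hje]; exact heJ _
  · rintro ⟨v, hcon, hsep, hmem⟩ i
    have hJeq : J = zpairJ n v := by
      ext j; rw [mem_zpairJ]; exact hmem j
    by_cases hi : i ∈ J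
    · exact le_of_eq (Finset.prod_eq_zero hi (by simp)).symm
    · rw [sign_iff ha hi]
      rw [hJeq] at hi ⊢
      exact (zpairJ_spec hk (fun l => (hcon l).1) (fun l => (hcon l).2) hsep).2 i hi

/-- Total version of the monotone enumeration of a finset. -/
def enumFun {m : ℕ} (S : Finset (Fin m)) (k : ℕ) : Fin k → ℕ :=
  fun l => if h : S.card = k then ((S.orderEmbOfFin h) l : ℕ) else 0

lemma enumFun_eq {m k : ℕ} {S : Finset (Fin m)} (h : S.card = k) (l : Fin k) :
    enumFun S k l = ((S.orderEmbOfFin h) l : ℕ) := by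
  simp only [enumFun]
  rw [dif_pos h]

set_option maxHeartbeats 1000000 in
lemma count_pair {n k : ℕ} (hk : 0 < k) (hn : 2 * k ≤ n) :
    (Finset.univ.filter fun J : Finset (Fin n) =>
        J.card = 2 * k ∧ IsPairUnion n k 0 J).card = (n - k).choose k := by
  have hklt : k - 1 < k := by omega
  have hB : (Finset.powersetCard k (Finset.univ : Finset (Fin (n - k)))).card
      = (n - k).choose k := by
    rw [Finset.card_powersetCard, Finset.card_univ, Fintype.card_fin]
  rw [← hB]
  have haux : ∀ (S : Finset (Fin (n - k))) (hS : S.card = k),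
      (∀ l : Fin k, enumFun S k l + (l : ℕ) + 1 ≤ n - 1) ∧
      (∀ l m : Fin k, l < m →
        enumFun S k l + (l : ℕ) + 1 < enumFun S k m + (m : ℕ)) := by
    intro S hS
    constructor
    · intro l
      rw [enumFun_eq hS]
      have h1 := ((S.orderEmbOfFin hS) l).2
      have h2 := l.2
      omega
    · intro l m hlm
      rw [enumFun_eq hS, enumFun_eq hS]
      have hlm' := hlm
      rw [Fin.lt_def] at hlm'
      have h3 := strictMono_add_le (S.orderEmbOfFin hS).strictMono
        ((m : ℕ) - (l : ℕ)) l m (by omega)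
      omega
  refine (Finset.card_bij
    (fun S _ => pairJ n (fun l : Fin k => enumFun S k l + (l : ℕ))) ?_ ?_ ?_).symm
  · -- maps into the filter
    intro S hSB
    have hS := (Finset.mem_powersetCard.1 hSB).2
    obtain ⟨hbd, hsep⟩ := haux S hS
    refine Finset.mem_filter.2 ⟨Finset.mem_univ _, (pairJ_spec hk hbd hsep).1, ?_⟩
    exact ⟨fun l => enumFun S k l + (l : ℕ), fun l => ⟨Nat.zero_le _, hbd l⟩, hsep,
      fun j => mem_pairJ j⟩
  · -- injective
    intro S1 hS1B S2 hS2B heq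
    have hS1 := (Finset.mem_powersetCard.1 hS1B).2
    have hS2 := (Finset.mem_powersetCard.1 hS2B).2
    obtain ⟨hbd1, hsep1⟩ := haux S1 hS1
    obtain ⟨hbd2, hsep2⟩ := haux S2 hS2
    have hcard : (pairJ n (fun l : Fin k => enumFun S1 k l + (l : ℕ))).card = 2 * k :=
      (pairJ_spec hk hbd1 hsep1).1
    have he1 := enum_pairs hk hcard hbd1 hsep1 (fun j => mem_pairJ j)
    have heq' : pairJ n (fun l : Fin k => enumFun S1 k l + (l : ℕ))
        = pairJ n (fun l : Fin k => enumFun S2 k l + (l : ℕ)) := heq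
    have he2 := enum_pairs hk hcard hbd2 hsep2 (fun j => by rw [heq']; exact mem_pairJ j)
    have hvv : ∀ l : Fin k, enumFun S1 k l + (l : ℕ) = enumFun S2 k l + (l : ℕ) := by
      intro l
      have q : 2 * (l : ℕ) < 2 * k := by have := l.2; omega
      have h1 : ((pairJ n (fun l : Fin k => enumFun S1 k l + (l : ℕ))).orderEmbOfFin
          hcard ⟨2 * (l : ℕ), q⟩ : ℕ) = enumFun S1 k l + (l : ℕ) :=
        (he1 l ⟨2 * (l : ℕ), q⟩).1 rfl
      have h2 : ((pairJ n (fun l : Fin k => enumFun S1 k l + (l : ℕ))).orderEmbOfFin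
          hcard ⟨2 * (l : ℕ), q⟩ : ℕ) = enumFun S2 k l + (l : ℕ) :=
        (he2 l ⟨2 * (l : ℕ), q⟩).1 rfl
      exact h1.symm.trans h2
    have hu : ∀ l : Fin k, (S1.orderEmbOfFin hS1) l = (S2.orderEmbOfFin hS2) l := by
      intro l
      apply Fin.ext
      have e1 := enumFun_eq hS1 l
      have e2 := enumFun_eq hS2 l
      have := hvv l
      omega
    ext x
    constructor
    · intro hx
      have : x ∈ Set.range (S1.orderEmbOfFin hS1) := by
        rw [Finset.range_orderEmbOfFin]; exact hx
      obtain ⟨l, rfl⟩ := this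
      rw [hu l]
      exact S2.orderEmbOfFin_mem hS2 l
    · intro hx
      have : x ∈ Set.range (S2.orderEmbOfFin hS2) := by
        rw [Finset.range_orderEmbOfFin]; exact hx
      obtain ⟨l, rfl⟩ := this
      rw [← hu l]
      exact S1.orderEmbOfFin_mem hS1 l
  · -- surjective
    intro J hJt
    obtain ⟨-, hJcard, v, hcon, hsep, hmem⟩ := Finset.mem_filter.1 hJt
    have hbd : ∀ l : Fin k, v l + 1 ≤ n - 1 := fun l => (hcon l).2
    have h2l : ∀ l : Fin k, 2 * (l : ℕ) ≤ v l := by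
      intro l
      have := vgap hsep (l : ℕ) ⟨0, hk⟩ l (show (l : ℕ) = 0 + (l : ℕ) by omega)
      omega
    have hbound : ∀ l : Fin k, v l - (l : ℕ) < n - k := by
      intro l
      have h1 := vgap hsep ((k - 1) - (l : ℕ)) l ⟨k - 1, hklt⟩
        (show k - 1 = (l : ℕ) + ((k - 1) - (l : ℕ)) by have := l.2; omega)
      have h2 := hbd ⟨k - 1, hklt⟩
      have h3 := l.2
      omega
    set w : Fin k → Fin (n - k) := fun l => ⟨v l - (l : ℕ), hbound l⟩ with hwdef
    have hwmono : StrictMono w := by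
      intro l m hlm
      rw [Fin.lt_def]
      show v l - (l : ℕ) < v m - (m : ℕ)
      have hlm' := hlm
      rw [Fin.lt_def] at hlm'
      have h1 := vgap hsep ((m : ℕ) - (l : ℕ)) l m (by omega)
      have h2 := h2l l
      omega
    set S : Finset (Fin (n - k)) := Finset.image w Finset.univ with hSdef
    have hScard : S.card = k := by
      rw [hSdef, Finset.card_image_of_injective _ hwmono.injective, Finset.card_univ,
        Fintype.card_fin]
    refine ⟨S, Finset.mem_powersetCard.2 ⟨Finset.subset_univ _, hScard⟩, ?_⟩
    have hw : ∀ x, w x ∈ S := fun x => Finset.mem_image_of_mem _ (Finset.mem_univ x)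
    have hueq := Finset.orderEmbOfFin_unique hScard hw hwmono
    have henum : ∀ l : Fin k, enumFun S k l = v l - (l : ℕ) := by
      intro l
      rw [enumFun_eq hScard, ← hueq]
    have hfun : (fun l : Fin k => enumFun S k l + (l : ℕ)) = v := by
      funext l
      rw [henum l]
      have := h2l l
      omega
    show pairJ n (fun l : Fin k => enumFun S k l + (l : ℕ)) = J
    rw [hfun]
    ext j
    rw [mem_pairJ]
    exact (hmem j).symm

set_option maxHeartbeats 1000000 in
lemma count_zpair {n k : ℕ} (hk : 0 < k) (hn : 2 * k + 1 ≤ n) :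
    (Finset.univ.filter fun J : Finset (Fin n) =>
        J.card = 2 * k + 1 ∧ IsZeroAndPairUnion n k J).card = (n - 1 - k).choose k := by
  have hklt : k - 1 < k := by omega
  have hB : (Finset.powersetCard k (Finset.univ : Finset (Fin (n - 1 - k)))).card
      = (n - 1 - k).choose k := by
    rw [Finset.card_powersetCard, Finset.card_univ, Fintype.card_fin]
  rw [← hB]
  have haux : ∀ (S : Finset (Fin (n - 1 - k))) (hS : S.card = k),
      (∀ l : Fin k, 1 ≤ enumFun S k l + (l : ℕ) + 1) ∧
      (∀ l : Fin k, enumFun S k l + (l : ℕ) + 1 + 1 ≤ n - 1) ∧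
      (∀ l m : Fin k, l < m →
        enumFun S k l + (l : ℕ) + 1 + 1 < enumFun S k m + (m : ℕ) + 1) := by
    intro S hS
    refine ⟨fun l => by omega, ?_, ?_⟩
    · intro l
      rw [enumFun_eq hS]
      have h1 := ((S.orderEmbOfFin hS) l).2
      have h2 := l.2
      omega
    · intro l m hlm
      rw [enumFun_eq hS, enumFun_eq hS]
      have hlm' := hlm
      rw [Fin.lt_def] at hlm'
      have h3 := strictMono_add_le (S.orderEmbOfFin hS).strictMono
        ((m : ℕ) - (l : ℕ)) l m (by omega)
      omega
  refine (Finset.card_bij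
    (fun S _ => zpairJ n (fun l : Fin k => enumFun S k l + (l : ℕ) + 1)) ?_ ?_ ?_).symm
  · intro S hSB
    have hS := (Finset.mem_powersetCard.1 hSB).2
    obtain ⟨hlo, hbd, hsep⟩ := haux S hS
    refine Finset.mem_filter.2 ⟨Finset.mem_univ _, (zpairJ_spec hk hlo hbd hsep).1, ?_⟩
    exact ⟨fun l => enumFun S k l + (l : ℕ) + 1, fun l => ⟨hlo l, hbd l⟩, hsep,
      fun j => mem_zpairJ j⟩
  · intro S1 hS1B S2 hS2B heq
    have hS1 := (Finset.mem_powersetCard.1 hS1B).2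
    have hS2 := (Finset.mem_powersetCard.1 hS2B).2
    obtain ⟨hlo1, hbd1, hsep1⟩ := haux S1 hS1
    obtain ⟨hlo2, hbd2, hsep2⟩ := haux S2 hS2
    have hcard : (zpairJ n (fun l : Fin k => enumFun S1 k l + (l : ℕ) + 1)).card
        = 2 * k + 1 := (zpairJ_spec hk hlo1 hbd1 hsep1).1
    have he1 := enum_zero_pairs hk hcard hlo1 hbd1 hsep1 (fun j => mem_zpairJ j)
    have heq' : zpairJ n (fun l : Fin k => enumFun S1 k l + (l : ℕ) + 1)
        = zpairJ n (fun l : Fin k => enumFun S2 k l + (l : ℕ) + 1) := heq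
    have he2 := enum_zero_pairs hk hcard hlo2 hbd2 hsep2
      (fun j => by rw [heq']; exact mem_zpairJ j)
    have hvv : ∀ l : Fin k,
        enumFun S1 k l + (l : ℕ) + 1 = enumFun S2 k l + (l : ℕ) + 1 := by
      intro l
      have q : 2 * (l : ℕ) + 1 < 2 * k + 1 := by have := l.2; omega
      have h1 : ((zpairJ n (fun l : Fin k => enumFun S1 k l + (l : ℕ) + 1)).orderEmbOfFin
          hcard ⟨2 * (l : ℕ) + 1, q⟩ : ℕ) = enumFun S1 k l + (l : ℕ) + 1 :=
        (he1 l ⟨2 * (l : ℕ) + 1, q⟩).1 rfl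
      have h2 : ((zpairJ n (fun l : Fin k => enumFun S1 k l + (l : ℕ) + 1)).orderEmbOfFin
          hcard ⟨2 * (l : ℕ) + 1, q⟩ : ℕ) = enumFun S2 k l + (l : ℕ) + 1 :=
        (he2 l ⟨2 * (l : ℕ) + 1, q⟩).1 rfl
      exact h1.symm.trans h2
    have hu : ∀ l : Fin k, (S1.orderEmbOfFin hS1) l = (S2.orderEmbOfFin hS2) l := by
      intro l
      apply Fin.ext
      have e1 := enumFun_eq hS1 l
      have e2 := enumFun_eq hS2 l
      have := hvv l
      omega
    ext x
    constructor
    · intro hx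
      have : x ∈ Set.range (S1.orderEmbOfFin hS1) := by
        rw [Finset.range_orderEmbOfFin]; exact hx
      obtain ⟨l, rfl⟩ := this
      rw [hu l]
      exact S2.orderEmbOfFin_mem hS2 l
    · intro hx
      have : x ∈ Set.range (S2.orderEmbOfFin hS2) := by
        rw [Finset.range_orderEmbOfFin]; exact hx
      obtain ⟨l, rfl⟩ := this
      rw [← hu l]
      exact S1.orderEmbOfFin_mem hS1 l
  · intro J hJt
    obtain ⟨-, hJcard, v, hcon, hsep, hmem⟩ := Finset.mem_filter.1 hJt
    have hlo : ∀ l : Fin k, 1 ≤ v l := fun l => (hcon l).1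
    have hbd : ∀ l : Fin k, v l + 1 ≤ n - 1 := fun l => (hcon l).2
    have h2l : ∀ l : Fin k, 2 * (l : ℕ) + 1 ≤ v l := by
      intro l
      have := vgap hsep (l : ℕ) ⟨0, hk⟩ l (show (l : ℕ) = 0 + (l : ℕ) by omega)
      have := hlo ⟨0, hk⟩
      omega
    have hbound : ∀ l : Fin k, v l - (l : ℕ) - 1 < n - 1 - k := by
      intro l
      have h1 := vgap hsep ((k - 1) - (l : ℕ)) l ⟨k - 1, hklt⟩
        (show k - 1 = (l : ℕ) + ((k - 1) - (l : ℕ)) by have := l.2; omega)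
      have h2 := hbd ⟨k - 1, hklt⟩
      have h3 := l.2
      have h4 := h2l l
      omega
    set w : Fin k → Fin (n - 1 - k) := fun l => ⟨v l - (l : ℕ) - 1, hbound l⟩ with hwdef
    have hwmono : StrictMono w := by
      intro l m hlm
      rw [Fin.lt_def]
      show v l - (l : ℕ) - 1 < v m - (m : ℕ) - 1
      have hlm' := hlm
      rw [Fin.lt_def] at hlm'
      have h1 := vgap hsep ((m : ℕ) - (l : ℕ)) l m (by omega)
      have h2 := h2l l
      omega
    set S : Finset (Fin (n - 1 - k)) := Finset.image w Finset.univ with hSdef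
    have hScard : S.card = k := by
      rw [hSdef, Finset.card_image_of_injective _ hwmono.injective, Finset.card_univ,
        Fintype.card_fin]
    refine ⟨S, Finset.mem_powersetCard.2 ⟨Finset.subset_univ _, hScard⟩, ?_⟩
    have hw : ∀ x, w x ∈ S := fun x => Finset.mem_image_of_mem _ (Finset.mem_univ x)
    have hueq := Finset.orderEmbOfFin_unique hScard hw hwmono
    have henum : ∀ l : Fin k, enumFun S k l = v l - (l : ℕ) - 1 := by
      intro l
      rw [enumFun_eq hScard, ← hueq]
    have hfun : (fun l : Fin k => enumFun S k l + (l : ℕ) + 1) = v := by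
      funext l
      rw [henum l]
      have := h2l l
      omega
    show zpairJ n (fun l : Fin k => enumFun S k l + (l : ℕ) + 1) = J
    rw [hfun]
    ext j
    rw [mem_zpairJ]
    exact (hmem j).symm

end Stmt15Aux

theorem stmt15 (n d : ℕ) (hd : 1 ≤ d) (hn : d + 1 ≤ n)
    (a : Fin n → ℝ) (ha : StrictMono a)
    (P : Finset (Fin n) → ℝ → ℝ) (hP : ∀ J T, P J T = ∏ j ∈ J, (T - a j)) :
    (Odd d →
      (∀ J : Finset (Fin n), J.card = d + 1 →
        ((∀ i, 0 ≤ P J (a i)) ↔ IsPairUnion n ((d + 1) / 2) 0 J)) ∧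
      (Finset.univ.filter fun J : Finset (Fin n) =>
          J.card = d + 1 ∧ IsPairUnion n ((d + 1) / 2) 0 J).card
        = Nat.choose (n - (d + 1) / 2) ((d + 1) / 2)) ∧
    (Even d →
      (∀ J : Finset (Fin n), J.card = d + 1 →
        ((∀ i, 0 ≤ P J (a i)) ↔ IsZeroAndPairUnion n (d / 2) J)) ∧
      (Finset.univ.filter fun J : Finset (Fin n) =>
          J.card = d + 1 ∧ IsZeroAndPairUnion n (d / 2) J).card
        = Nat.choose (n - 1 - d / 2) (d / 2)) := by
  constructor
  · intro hodd
    obtain ⟨k, hkeq⟩ : ∃ k, (d + 1) / 2 = k := ⟨_, rfl⟩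
    have hdk : d + 1 = 2 * k := by obtain ⟨c, hc⟩ := hodd; omega
    have hkpos : 0 < k := by omega
    rw [hkeq, hdk]
    constructor
    · intro J hJ
      simp only [hP]
      exact Stmt15Aux.char_pair hkpos ha hJ
    · exact Stmt15Aux.count_pair hkpos (by omega)
  · intro heven
    obtain ⟨k, hkeq⟩ : ∃ k, d / 2 = k := ⟨_, rfl⟩
    have hdk : d = 2 * k := by obtain ⟨c, hc⟩ := heven; omega
    have hkpos : 0 < k := by omega
    rw [hkeq, show d + 1 = 2 * k + 1 from by omega]
    constructor
    · intro J hJ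
      simp only [hP]
      exact Stmt15Aux.char_zpair hkpos (by omega) ha hJ
    · exact Stmt15Aux.count_zpair hkpos (by omega)
end
end

section
/- Let d be odd, k = (d+1)/2, and n ≥ d+1. Let S_{n,d} be the set of k-tuples 1 ≤ i_1 < i_2 < ⋯ < i_k ≤ n−1 of integers such that for every j ∈ {1,…,k−1}: i_{j+1} − i_j ≥ 2, and moreover either i_j is odd or i_{j+1} − i_j > 2. To a tuple i = (i_1,…,i_k) ∈ S_{n,d} associate the (d+1)-element set V(i) = {i_1, i_1+1, i_2, i_2+1, …, i_k, i_k+1}. Then for any two distinct tuples i, i′ ∈ S_{n,d} with |V(i) ∩ V(i′)| = d, the sums i_1 + ⋯ + i_k and i′_1 + ⋯ + i′_k have opposite parities. Consequently, the graph with vertex set S_{n,d} and edges between tuples i, i′ with |V(i) ∩ V(i′)| = d is bipartite. -/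
noncomputable section

attribute [local instance] Classical.propDecidable

namespace Stmt16Aux

def okT (n : ℕ) {k : ℕ} (i : Fin k → ℕ) : Prop :=
  (∀ j, 1 ≤ i j ∧ i j ≤ n - 1) ∧ StrictMono i ∧
    ∀ j l : Fin k, (j : ℕ) + 1 = (l : ℕ) →
      2 ≤ i l - i j ∧ (Odd (i j) ∨ 2 < i l - i j)

def memV {k : ℕ} (i : Fin k → ℕ) (x : ℕ) : Prop :=
  ∃ j, x = i j ∨ x = i j + 1

variable {n k : ℕ} {i : Fin k → ℕ}

lemma gap (hi : okT n i) {j l : Fin k} (h : (j : ℕ) < (l : ℕ)) : i j + 2 ≤ i l := by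
  have hk' : (j : ℕ) + 1 < k := lt_of_le_of_lt h l.isLt
  have hc := (hi.2.2 j ⟨(j : ℕ) + 1, hk'⟩ rfl).1
  have hjm : i j < i ⟨(j : ℕ) + 1, hk'⟩ := hi.2.1 (by simp [Fin.lt_def])
  have h2 : i ⟨(j : ℕ) + 1, hk'⟩ ≤ i l := by
    rcases eq_or_lt_of_le (show (j : ℕ) + 1 ≤ (l : ℕ) from h) with he | hlt
    · have : (⟨(j : ℕ) + 1, hk'⟩ : Fin k) = l := Fin.ext he
      rw [this]
    · exact le_of_lt (hi.2.1 (by simp [Fin.lt_def]; omega))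
  omega

lemma gap' (hi : okT n i) {j l : Fin k} (h : j ≠ l) : i j + 2 ≤ i l ∨ i l + 2 ≤ i j := by
  rcases Nat.lt_trichotomy (j : ℕ) (l : ℕ) with h1 | h1 | h1
  · exact Or.inl (gap hi h1)
  · exact absurd (Fin.ext h1) h
  · exact Or.inr (gap hi h1)

/-- no element is both a start and an end of dominoes -/
lemma no_start_end (hi : okT n i) {j l : Fin k} {x : ℕ} (hj : x = i j) (hl : x = i l + 1) :
    False := by
  rcases eq_or_ne j l with rfl | hne
  · omega
  · rcases gap' hi hne with h | h <;> omega

/-- no two starts at distance 1 -/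
lemma starts_gap1 (hi : okT n i) {j l : Fin k} {x : ℕ} (hj : x = i j) (hl : x + 1 = i l) :
    False := by
  rcases eq_or_ne j l with rfl | hne
  · omega
  · rcases gap' hi hne with h | h <;> omega

/-- two starts at distance exactly 2 force oddness -/
lemma starts_odd (hi : okT n i) {j l : Fin k} {x : ℕ} (hj : i j = x) (hl : i l = x + 2) :
    Odd x := by
  have hjl : j < l := hi.2.1.lt_iff_lt.mp (by omega)
  have hjl' : (j : ℕ) < (l : ℕ) := hjl
  rcases eq_or_lt_of_le (show (j : ℕ) + 1 ≤ (l : ℕ) from hjl') with he | hlt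
  · have hc := hi.2.2 j l he
    rcases hc.2 with hodd | hbig
    · rwa [hj] at hodd
    · omega
  · have hm : (j : ℕ) + 1 < k := lt_trans hlt l.isLt
    have h1 : i j + 2 ≤ i ⟨(j : ℕ) + 1, hm⟩ := gap hi (by simp)
    have h2 : i ⟨(j : ℕ) + 1, hm⟩ + 2 ≤ i l := gap hi (by simpa using hlt)
    omega

lemma desc {i' : Fin k → ℕ} (hi : okT n i) (hi' : okT n i') (a b : ℕ)
    (htr : ∀ x, x ≠ a → x ≠ b → (memV i x ↔ memV i' x)) (hab : a < b) :
    ∀ x, x < a → (∃ m, x = i m) → (∃ l, x = i' l + 1) → False := by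
  intro x
  induction x using Nat.strong_induction_on with
  | _ x IH =>
    rintro hxa ⟨m, hm⟩ ⟨l, hl⟩
    have hyV' : memV i' (i' l) := ⟨l, Or.inl rfl⟩
    have hyV : memV i (i' l) := (htr (i' l) (by omega) (by omega)).2 hyV'
    obtain ⟨m', hm'⟩ := hyV
    rcases hm' with h1 | h2
    · exact starts_gap1 hi (l := m) h1 (by omega)
    · -- i' l = i m' + 1, so z := i m' , x = z + 2
      have hzV : memV i (i m') := ⟨m', Or.inl rfl⟩
      have hzV' : memV i' (i m') := (htr (i m') (by omega) (by omega)).1 hzV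
      obtain ⟨r, hr⟩ := hzV'
      rcases hr with h3 | h4
      · exact starts_gap1 hi' (l := l) h3 (by omega)
      · exact IH (i m') (by omega) (by omega) ⟨m', rfl⟩ ⟨r, h4⟩

lemma asc {i' : Fin k → ℕ} (hi : okT n i) (hi' : okT n i') (a b : ℕ)
    (htr : ∀ x, x ≠ a → x ≠ b → (memV i x ↔ memV i' x)) (hab : a < b)
    (hbV : ¬ memV i b) (hstart : ∃ l, b = i' l) : False := by
  have key : ∀ t : ℕ, (∃ m, b + 1 + 2 * t = i m) ∧ (∃ r, b + 1 + 2 * t = i' r + 1) := by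
    intro t
    induction t with
    | zero =>
      obtain ⟨l, hl⟩ := hstart
      have h2 : memV i' (b + 1) := ⟨l, Or.inr (by omega)⟩
      have h1 : memV i (b + 1) := (htr (b + 1) (by omega) (by omega)).2 h2
      obtain ⟨m, hm⟩ := h1
      rcases hm with h | h
      · exact ⟨⟨m, by omega⟩, ⟨l, by omega⟩⟩
      · exact absurd ⟨m, Or.inl (by omega)⟩ hbV
    | succ t ih =>
      obtain ⟨⟨m, hm⟩, ⟨r, hr⟩⟩ := ih
      set x := b + 1 + 2 * t with hx
      have hx1V : memV i (x + 1) := ⟨m, Or.inr (by omega)⟩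
      have hx1V' : memV i' (x + 1) := (htr (x + 1) (by omega) (by omega)).1 hx1V
      obtain ⟨s, hs⟩ := hx1V'
      rcases hs with hs | hs
      · -- x + 1 = i' s, a start
        have hx2V' : memV i' (x + 2) := ⟨s, Or.inr (by omega)⟩
        have hx2V : memV i (x + 2) := (htr (x + 2) (by omega) (by omega)).2 hx2V'
        obtain ⟨m2, hm2⟩ := hx2V
        rcases hm2 with hm2 | hm2
        · exact ⟨⟨m2, by omega⟩, ⟨s, by omega⟩⟩
        · exact absurd (starts_gap1 hi (l := m2) hm (by omega)) not_false
      · -- x + 1 = i' s + 1, i.e. x = i' s : two ends/start clash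
        exact absurd (no_start_end hi' (l := r) (show (x : ℕ) = i' s by omega) (by omega)) not_false
  obtain ⟨⟨m, hm⟩, -⟩ := key n
  have := (hi.1 m).2
  omega

/-- the heart: the exchanged elements are at distance exactly 2 -/
lemma main_lemma {i' : Fin k → ℕ} (hi : okT n i) (hi' : okT n i') (a b : ℕ) (hab : a < b)
    (haV : memV i a) (haV' : ¬ memV i' a) (hbV' : memV i' b) (hbV : ¬ memV i b)
    (htr : ∀ x, x ≠ a → x ≠ b → (memV i x ↔ memV i' x)) : b = a + 2 := by
  -- step 1 : a is a start of i
  obtain ⟨j, hj⟩ := haV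
  have hjstart : a = i j := by
    rcases hj with h | h
    · exact h
    · -- a = i j + 1 : use descent
      exfalso
      have hy' : memV i' (i j) := (htr (i j) (by omega) (by omega)).1 ⟨j, Or.inl rfl⟩
      obtain ⟨l, hl⟩ := hy'
      rcases hl with hl | hl
      · exact haV' ⟨l, Or.inr (by omega)⟩
      · exact desc hi hi' a b htr hab (i j) (by omega) ⟨j, rfl⟩ ⟨l, hl⟩
  -- step 2 : b is an end of i'
  obtain ⟨l, hl⟩ := hbV'
  have hlend : b = i' l + 1 := by
    rcases hl with hl | hl
    · exact absurd (asc hi hi' a b htr hab hbV ⟨l, hl⟩) not_false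
    · exact hl
  -- step 3 : b ≠ a + 1
  have hba1 : b ≠ a + 1 := by
    intro h
    exact hbV ⟨j, Or.inr (by omega)⟩
  -- step 4 : suppose b ≥ a + 3
  by_contra hne
  have hb3 : a + 3 ≤ b := by omega
  -- a+1 ∈ V, transfer to V'
  have h1' : memV i' (a + 1) := (htr (a + 1) (by omega) (by omega)).1 ⟨j, Or.inr (by omega)⟩
  obtain ⟨r, hr⟩ := h1'
  have hrs : a + 1 = i' r := by
    rcases hr with h | h
    · exact h
    · exact absurd (haV' ⟨r, Or.inl (by omega)⟩) not_false
  -- a+2 ∈ V', transfer to V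
  have h2 : memV i (a + 2) := (htr (a + 2) (by omega) (by omega)).2 ⟨r, Or.inr (by omega)⟩
  obtain ⟨s, hs⟩ := h2
  have hss : a + 2 = i s := by
    rcases hs with h | h
    · exact h
    · exact absurd (starts_gap1 hi (l := s) hjstart (by omega)) not_false
  have hodda : Odd a := starts_odd hi (l := s) hjstart.symm (by omega)
  -- a + 3 ∈ V
  have h3V : memV i (a + 3) := ⟨s, Or.inr (by omega)⟩
  have hb4 : a + 4 ≤ b := by
    rcases eq_or_ne b (a + 3) with rfl | h
    · exact absurd h3V hbV
    · omega
  have h3' : memV i' (a + 3) := (htr (a + 3) (by omega) (by omega)).1 h3V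
  obtain ⟨u, hu⟩ := h3'
  have huu : a + 3 = i' u := by
    rcases hu with h | h
    · exact h
    · exact absurd (starts_gap1 hi' (l := u) hrs (by omega)) not_false
  have hodda1 : Odd (a + 1) := starts_odd hi' (l := u) hrs.symm (by omega)
  obtain ⟨c1, hc1⟩ := hodda
  obtain ⟨c2, hc2⟩ := hodda1
  omega

lemma V_disj (hi : okT n i) : ∀ j ∈ (Finset.univ : Finset (Fin k)), ∀ l ∈ Finset.univ,
    j ≠ l → Disjoint ({i j, i j + 1} : Finset ℕ) {i l, i l + 1} := by
  intro j _ l _ hne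
  rw [Finset.disjoint_left]
  intro x hx hx'
  simp only [Finset.mem_insert, Finset.mem_singleton] at hx hx'
  rcases gap' hi hne with h | h <;> omega

lemma mem_V (x : ℕ) :
    x ∈ (Finset.univ.biUnion fun j => ({i j, i j + 1} : Finset ℕ)) ↔ memV i x := by
  simp [memV, Finset.mem_biUnion]

lemma card_V (hi : okT n i) :
    (Finset.univ.biUnion fun j => ({i j, i j + 1} : Finset ℕ)).card = 2 * k := by
  rw [Finset.card_biUnion (V_disj hi)]
  have : ∀ j : Fin k, ({i j, i j + 1} : Finset ℕ).card = 2 := by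
    intro j
    rw [Finset.card_insert_of_notMem (by simp), Finset.card_singleton]
  simp [this, Finset.sum_const, Finset.card_univ, mul_comm]

lemma sum_V (hi : okT n i) :
    (∑ x ∈ (Finset.univ.biUnion fun j => ({i j, i j + 1} : Finset ℕ)), x / 2) = ∑ j, i j := by
  rw [Finset.sum_biUnion]
  · apply Finset.sum_congr rfl
    intro j _
    rw [Finset.sum_insert (by simp), Finset.sum_singleton]
    omega
  · intro j _ l _ hne
    exact V_disj hi j (Finset.mem_univ j) l (Finset.mem_univ l) hne

end Stmt16Aux

open Stmt16Aux
theorem stmt16 (d : ℕ) (hodd : Odd d) (k : ℕ) (hk : k = (d + 1) / 2)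
    (n : ℕ) (hn : d + 1 ≤ n)
    (S : Set (Fin k → ℕ))
    (hS : S = {i | (∀ j, 1 ≤ i j ∧ i j ≤ n - 1) ∧ StrictMono i ∧
      ∀ j l : Fin k, (j : ℕ) + 1 = (l : ℕ) →
        2 ≤ i l - i j ∧ (Odd (i j) ∨ 2 < i l - i j)})
    (V : (Fin k → ℕ) → Finset ℕ)
    (hV : ∀ i, V i = Finset.univ.biUnion fun j => {i j, i j + 1}) :
    (∀ i ∈ S, ∀ i' ∈ S, i ≠ i' → (V i ∩ V i').card = d →
      ¬ ((∑ j, i j) % 2 = (∑ j, i' j) % 2)) ∧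
    (∃ χ : (Fin k → ℕ) → Bool,
      ∀ i ∈ S, ∀ i' ∈ S, i ≠ i' → (V i ∩ V i').card = d → χ i ≠ χ i') := by
  have h2k : d + 1 = 2 * k := by
    obtain ⟨m, hm⟩ := hodd
    omega
  have part1 : ∀ i ∈ S, ∀ i' ∈ S, i ≠ i' → (V i ∩ V i').card = d →
      ¬ ((∑ j, i j) % 2 = (∑ j, i' j) % 2) := by
    subst hS
    intro i hi i' hi' hne hcard hpar
    have hoki : okT n i := hi
    have hoki' : okT n i' := hi'
    rw [hV i, hV i'] at hcard
    set Vi := Finset.univ.biUnion fun j => ({i j, i j + 1} : Finset ℕ) with hVi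
    set Vi' := Finset.univ.biUnion fun j => ({i' j, i' j + 1} : Finset ℕ) with hVi'
    have hcVi : Vi.card = 2 * k := card_V hoki
    have hcVi' : Vi'.card = 2 * k := card_V hoki'
    have hsd1 : (Vi \ Vi').card = 1 := by
      have := Finset.card_inter_add_card_sdiff Vi Vi'
      omega
    have hsd2 : (Vi' \ Vi).card = 1 := by
      have := Finset.card_inter_add_card_sdiff Vi' Vi
      rw [Finset.inter_comm] at this
      omega
    obtain ⟨a, ha⟩ := Finset.card_eq_one.mp hsd1
    obtain ⟨b, hb⟩ := Finset.card_eq_one.mp hsd2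
    have haVi : a ∈ Vi ∧ a ∉ Vi' := by
      have : a ∈ Vi \ Vi' := ha ▸ Finset.mem_singleton_self a
      exact ⟨(Finset.mem_sdiff.mp this).1, (Finset.mem_sdiff.mp this).2⟩
    have hbVi : b ∈ Vi' ∧ b ∉ Vi := by
      have : b ∈ Vi' \ Vi := hb ▸ Finset.mem_singleton_self b
      exact ⟨(Finset.mem_sdiff.mp this).1, (Finset.mem_sdiff.mp this).2⟩
    have hne_ab : a ≠ b := fun h => haVi.2 (h ▸ hbVi.1)
    have htr : ∀ x, x ≠ a → x ≠ b → (memV i x ↔ memV i' x) := by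
      intro x hxa hxb
      rw [← mem_V, ← mem_V, ← hVi, ← hVi']
      constructor
      · intro hx
        by_contra hx'
        have : x ∈ Vi \ Vi' := Finset.mem_sdiff.mpr ⟨hx, hx'⟩
        rw [ha] at this
        exact hxa (Finset.mem_singleton.mp this)
      · intro hx
        by_contra hx'
        have : x ∈ Vi' \ Vi := Finset.mem_sdiff.mpr ⟨hx, hx'⟩
        rw [hb] at this
        exact hxb (Finset.mem_singleton.mp this)
    have hmemVa : memV i a := (mem_V a).mp (hVi ▸ haVi.1)
    have hmemVa' : ¬ memV i' a := fun h => haVi.2 (hVi' ▸ (mem_V a).mpr h)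
    have hmemVb' : memV i' b := (mem_V b).mp (hVi' ▸ hbVi.1)
    have hmemVb : ¬ memV i b := fun h => hbVi.2 (hVi ▸ (mem_V b).mpr h)
    -- sums
    have hsum : (∑ x ∈ Vi, x / 2) = ∑ j, i j := sum_V hoki
    have hsum' : (∑ x ∈ Vi', x / 2) = ∑ j, i' j := sum_V hoki'
    have hsplit : (∑ x ∈ Vi ∩ Vi', x / 2) + a / 2 = ∑ x ∈ Vi, x / 2 := by
      have := Finset.sum_inter_add_sum_sdiff Vi Vi' (fun x => x / 2)
      rw [ha, Finset.sum_singleton] at this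
      exact this
    have hsplit' : (∑ x ∈ Vi ∩ Vi', x / 2) + b / 2 = ∑ x ∈ Vi', x / 2 := by
      have := Finset.sum_inter_add_sum_sdiff Vi' Vi (fun x => x / 2)
      rw [hb, Finset.sum_singleton, Finset.inter_comm] at this
      exact this
    rcases lt_trichotomy a b with hab | hab | hab
    · have hb2 : b = a + 2 :=
        main_lemma hoki hoki' a b hab hmemVa hmemVa' hmemVb' hmemVb htr
      omega
    · exact hne_ab hab
    · have ha2 : a = b + 2 := by
        refine main_lemma hoki' hoki b a hab hmemVb' hmemVb hmemVa hmemVa' ?_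
        intro x hxb hxa
        exact (htr x hxa hxb).symm
      omega
  refine ⟨part1, ⟨fun i => decide ((∑ j, i j) % 2 = 0), ?_⟩⟩
  intro i hi i' hi' hne hcard heq
  apply part1 i hi i' hi' hne hcard
  have hiff := decide_eq_decide.mp heq
  rcases Nat.mod_two_eq_zero_or_one (∑ j, i j) with h | h <;>
    rcases Nat.mod_two_eq_zero_or_one (∑ j, i' j) with h' | h' <;>
    simp [h, h'] at hiff ⊢
end
end

section
/- Let d be odd, k = (d+1)/2, and n ≥ d+1. Let c_{n,d} be the number of k-tuples of integers 1 ≤ i_1 < i_2 < ⋯ < i_k ≤ n−1 such that for every j ∈ {1,…,k−1}: i_{j+1} − i_j ≥ 2, and either i_j is odd or i_{j+1} − i_j > 2. Then c_{n,d} equals the coefficient of X^n Y^k in the formal power series expansion at the origin of the rational function (1 + X + X³Y)/(1 − X² − X²Y − X⁴Y). -/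
noncomputable section

attribute [local instance] Classical.propDecidable

/-- Tuples `1 ≤ i 0 < i 1 < ⋯ < i (k-1) ≤ n - 1` such that consecutive entries
differ by at least `2`, and each entry is odd or at distance more than `2`
from the next one. -/
def GoodTuple (k n : ℕ) (i : Fin k → Fin n) : Prop :=
  (∀ j, 1 ≤ (i j : ℕ)) ∧ StrictMono i ∧
  ∀ j l : Fin k, (j : ℕ) + 1 = (l : ℕ) →
    2 ≤ (i l : ℕ) - (i j : ℕ) ∧ (Odd (i j : ℕ) ∨ 2 < (i l : ℕ) - (i j : ℕ))

/-!
Let `N(k, n)` be the number of good `k`-tuples below `n` and classify them by their first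
entry `i₁`. If `i₁ = 1`, the rest of the tuple, shifted down by `2`, is an arbitrary good
`(k-1)`-tuple below `n - 2`; if `i₁ = 2`, the next entry must be at least `5` and the rest,
shifted down by `4`, is a good `(k-1)`-tuple below `n - 4`; if `i₁ ≥ 3`, the whole tuple shifted
down by `2` is a good `k`-tuple below `n - 2` (even shifts preserve the parity condition). Thus
`N(k, n) = N(k, n-2) + N(k-1, n-2) + N(k-1, n-4)` up to boundary terms, which says exactly that
`F = ∑ N(k, n) XⁿYᵏ` satisfies `(1 - X² - X²Y - X⁴Y) F = 1 + X + X³Y`. The denominator has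
constant coefficient `1`, so it is a unit and `G = F`.
-/

section Combinatorics

open Finset

def Spaced (a b : ℕ) : Prop := 2 ≤ b - a ∧ (Odd a ∨ 2 < b - a)

lemma Spaced.lt {a b : ℕ} (h : Spaced a b) : a < b := by
  unfold Spaced at h
  omega

lemma spaced_add_add_iff {a b s : ℕ} (hs : Even s) : Spaced (a + s) (b + s) ↔ Spaced a b := by
  simp [Spaced, Nat.add_sub_add_right, Nat.odd_add, hs]

/-- `GoodTuple` with entries read in `ℕ`, so that tuples can be shifted without bound proofs. -/
def GoodSeq {k : ℕ} (f : Fin k → ℕ) : Prop :=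
  (∀ j, 1 ≤ f j) ∧ ∀ j l : Fin k, (j : ℕ) + 1 = l → Spaced (f j) (f l)

lemma GoodSeq.strictMono {k : ℕ} {f : Fin k → ℕ} (hf : GoodSeq f) : StrictMono f := by
  cases k with
  | zero => exact fun j => j.elim0
  | succ k => exact Fin.strictMono_iff_lt_succ.2 fun j => (hf.2 _ _ (by simp)).lt

lemma goodTuple_iff_goodSeq {k n : ℕ} (i : Fin k → Fin n) :
    GoodTuple k n i ↔ GoodSeq fun j => (i j : ℕ) :=
  ⟨fun h => ⟨h.1, h.2.2⟩, fun h => ⟨h.1, fun _ _ hab => h.strictMono hab, h.2⟩⟩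

lemma goodSeq_cons_iff {k a : ℕ} {g : Fin k → ℕ} :
    GoodSeq (Fin.cons a g : Fin (k + 1) → ℕ) ↔
      1 ≤ a ∧ (∀ j : Fin k, (j : ℕ) = 0 → Spaced a (g j)) ∧ GoodSeq g := by
  simp [GoodSeq, Fin.forall_fin_succ]
  tauto

def goodSeqs (k n : ℕ) : Finset (Fin k → ℕ) :=
  (Fintype.piFinset fun _ => range n).filter GoodSeq

lemma mem_goodSeqs {k n : ℕ} {f : Fin k → ℕ} : f ∈ goodSeqs k n ↔ (∀ j, f j < n) ∧ GoodSeq f := by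
  simp [goodSeqs]

def goodCount (k n : ℕ) : ℕ := #(goodSeqs k n)

lemma card_filter_goodTuple (k n : ℕ) : #{i | GoodTuple k n i} = goodCount k n := by
  refine card_bij' (fun i _ j => (i j : ℕ)) (fun f hf j => ⟨f j, (mem_goodSeqs.1 hf).1 j⟩)
    ?_ ?_ (fun _ _ => rfl) (fun _ _ => rfl)
  · intro i hi
    simpa [mem_goodSeqs, goodTuple_iff_goodSeq] using hi
  · intro f hf
    simpa [goodTuple_iff_goodSeq] using (mem_goodSeqs.1 hf).2

lemma goodCount_zero (n : ℕ) : goodCount 0 n = 1 := by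
  rw [goodCount, card_eq_one]
  exact ⟨Fin.elim0, eq_singleton_iff_unique_mem.2
    ⟨mem_goodSeqs.2 ⟨(·.elim0), (·.elim0), fun j => j.elim0⟩, fun _ _ => Subsingleton.elim _ _⟩⟩

lemma goodCount_succ_of_le_one (k : ℕ) {m : ℕ} (hm : m ≤ 1) : goodCount (k + 1) m = 0 := by
  refine card_eq_zero.2 (eq_empty_of_forall_notMem fun f hf => ?_)
  have := (mem_goodSeqs.1 hf).1 0
  have := (mem_goodSeqs.1 hf).2.1 0
  omega

lemma card_filter_forall_lt_goodSeqs_add (k n : ℕ) {s : ℕ} (hs : Even s) :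
    #{f ∈ goodSeqs k (n + s) | ∀ j, s < f j} = goodCount k n := by
  refine card_nbij' (fun f j => f j - s) (fun g j => g j + s) ?_ ?_ ?_ ?_
  · intro f hf
    simp only [coe_filter, Set.mem_ofPred_eq, mem_coe, mem_goodSeqs] at hf ⊢
    obtain ⟨⟨hlt, -, hsp⟩, hgt⟩ := hf
    refine ⟨fun j => by have := hlt j; have := hgt j; omega, fun j => Nat.sub_pos_of_lt (hgt j),
      fun j l hjl => ?_⟩
    rw [← spaced_add_add_iff hs, Nat.sub_add_cancel (hgt j).le, Nat.sub_add_cancel (hgt l).le]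
    exact hsp j l hjl
  · intro g hg
    simp only [coe_filter, Set.mem_ofPred_eq, mem_coe, mem_goodSeqs] at hg ⊢
    obtain ⟨hlt, hpos, hsp⟩ := hg
    exact ⟨⟨fun j => by have := hlt j; omega, fun j => le_add_right (hpos j),
      fun j l hjl => (spaced_add_add_iff hs).2 (hsp j l hjl)⟩, fun j => by have := hpos j; omega⟩
  · intro f hf
    simp only [coe_filter, Set.mem_ofPred_eq] at hf
    funext j
    exact Nat.sub_add_cancel (hf.2 j).le
  · intro g _
    funext j
    exact Nat.add_sub_cancel _ _

lemma card_filter_head_eq_goodSeqs_succ (k : ℕ) {m a b : ℕ} (ha : 1 ≤ a) (ham : a < m)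
    (hb : ∀ x, Spaced a x ↔ b < x) :
    #{f ∈ goodSeqs (k + 1) m | f 0 = a} = #{g ∈ goodSeqs k m | ∀ j, b < g j} := by
  refine card_nbij' Fin.tail (fun g => Fin.cons a g) ?_ ?_ ?_ ?_
  · intro f hf
    simp only [coe_filter, Set.mem_ofPred_eq, mem_goodSeqs] at hf ⊢
    obtain ⟨⟨hlt, hf⟩, rfl⟩ := hf
    rw [← Fin.cons_self_tail f, goodSeq_cons_iff] at hf
    obtain ⟨-, hhead, htail⟩ := hf
    refine ⟨⟨fun j => hlt _, htail⟩, fun j => ?_⟩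
    let j₀ : Fin k := ⟨0, j.pos⟩
    calc b < Fin.tail f j₀ := (hb _).1 (hhead j₀ rfl)
      _ ≤ Fin.tail f j := htail.strictMono.monotone (Fin.mk_le_of_le_val (Nat.zero_le _))
  · intro g hg
    simp only [coe_filter, Set.mem_ofPred_eq, mem_goodSeqs, goodSeq_cons_iff, Fin.forall_fin_succ,
      Fin.cons_zero, Fin.cons_succ] at hg ⊢
    obtain ⟨⟨hlt, hg⟩, hgt⟩ := hg
    exact ⟨⟨⟨ham, hlt⟩, ha, fun j _ => (hb _).2 (hgt j), hg⟩, trivial⟩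
  · intro f hf
    simp only [coe_filter, Set.mem_ofPred_eq] at hf
    rw [← hf.2]
    exact Fin.cons_self_tail f
  · intro g _
    exact Fin.tail_cons _ _

lemma goodCount_succ_eq_card_heads (k m : ℕ) :
    goodCount (k + 1) m = #{f ∈ goodSeqs (k + 1) m | f 0 = 1} +
      #{f ∈ goodSeqs (k + 1) m | f 0 = 2} + #{f ∈ goodSeqs (k + 1) m | 2 < f 0} := by
  rw [goodCount, ← card_union_of_disjoint, ← card_union_of_disjoint, ← filter_or, ← filter_or,
    filter_true_of_mem]
  · intro f hf
    have := (mem_goodSeqs.1 hf).2.1 0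
    omega
  all_goals
    simp only [disjoint_union_left, disjoint_filter]
    grind

lemma spaced_one_iff (x : ℕ) : Spaced 1 x ↔ 2 < x := by
  simp only [Spaced, odd_one, true_or, and_true]
  omega

lemma spaced_two_iff (x : ℕ) : Spaced 2 x ↔ 4 < x := by
  simp only [Spaced, Nat.odd_iff]
  omega

lemma card_filter_head_eq_one (k n : ℕ) :
    #{f ∈ goodSeqs (k + 1) (n + 2) | f 0 = 1} = goodCount k n := by
  rw [card_filter_head_eq_goodSeqs_succ k le_rfl (by omega) spaced_one_iff,
    card_filter_forall_lt_goodSeqs_add k n even_two]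

lemma card_filter_head_gt_two (k n : ℕ) :
    #{f ∈ goodSeqs (k + 1) (n + 2) | 2 < f 0} = goodCount (k + 1) n := by
  rw [← card_filter_forall_lt_goodSeqs_add (k + 1) n even_two]
  congr 1
  refine filter_congr fun f hf => ⟨fun h j => ?_, fun h => h 0⟩
  exact h.trans_le ((mem_goodSeqs.1 hf).2.strictMono.monotone (Fin.zero_le j))

lemma card_filter_head_eq_two_add_four (k n : ℕ) :
    #{f ∈ goodSeqs (k + 1) (n + 4) | f 0 = 2} = goodCount k n := by
  rw [card_filter_head_eq_goodSeqs_succ k (by omega) (by omega) spaced_two_iff,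
    card_filter_forall_lt_goodSeqs_add k n (by decide)]

/-- The tuple `(2)` for `n = 3`: the source of the `X³Y` term of the numerator. -/
lemma card_filter_head_eq_two_three (k : ℕ) :
    #{f ∈ goodSeqs (k + 1) 3 | f 0 = 2} = if k = 0 then 1 else 0 := by
  rw [card_filter_head_eq_goodSeqs_succ k (by omega) (by omega) spaced_two_iff]
  cases k with
  | zero =>
    rw [filter_true_of_mem fun _ _ j => j.elim0, if_pos rfl]
    exact goodCount_zero 3
  | succ k =>
    rw [if_neg k.succ_ne_zero, card_eq_zero, filter_eq_empty_iff]
    intro g hg hgt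
    have := (mem_goodSeqs.1 hg).1 0
    have := hgt 0
    omega

lemma card_filter_head_eq_two_two (k : ℕ) : #{f ∈ goodSeqs (k + 1) 2 | f 0 = 2} = 0 :=
  card_eq_zero.2 (filter_eq_empty_iff.2 fun f hf h => by have := (mem_goodSeqs.1 hf).1 0; omega)

lemma goodCount_succ_add_two (k n : ℕ) :
    goodCount (k + 1) (n + 2) =
      goodCount k n + #{f ∈ goodSeqs (k + 1) (n + 2) | f 0 = 2} + goodCount (k + 1) n := by
  rw [goodCount_succ_eq_card_heads, card_filter_head_eq_one, card_filter_head_gt_two]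

end Combinatorics

section Series

open MvPowerSeries Finsupp

variable {R : Type*} [CommSemiring R]

lemma X_pow_mul_X_pow_eq_monomial (a b : ℕ) :
    (X 0 ^ a * X 1 ^ b : MvPowerSeries (Fin 2) R) = monomial (single 0 a + single 1 b) 1 := by
  rw [X_pow_eq, X_pow_eq, monomial_mul_monomial, one_mul]

lemma coeff_X_pow_mul_X_pow (a b : ℕ) (m : Fin 2 →₀ ℕ) :
    coeff m (X 0 ^ a * X 1 ^ b : MvPowerSeries (Fin 2) R) = if m 0 = a ∧ m 1 = b then 1 else 0 := by
  simp [X_pow_mul_X_pow_eq_monomial, coeff_monomial, Finsupp.ext_iff, Fin.forall_fin_two]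

lemma coeff_X_pow_mul_X_pow_mul (a b : ℕ) (φ : MvPowerSeries (Fin 2) R) (m : Fin 2 →₀ ℕ) :
    coeff m (X 0 ^ a * X 1 ^ b * φ) =
      if a ≤ m 0 ∧ b ≤ m 1 then coeff (m - (single 0 a + single 1 b)) φ else 0 := by
  simp [X_pow_mul_X_pow_eq_monomial, coeff_monomial_mul, Finsupp.le_def, Fin.forall_fin_two]

def goodSeries : MvPowerSeries (Fin 2) ℚ := fun m => (goodCount (m 1) (m 0) : ℚ)

lemma coeff_goodSeries (m : Fin 2 →₀ ℕ) : coeff m goodSeries = goodCount (m 1) (m 0) := rfl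

theorem denominator_mul_goodSeries :
    (1 - X 0 ^ 2 - X 0 ^ 2 * X 1 - X 0 ^ 4 * X 1) * goodSeries = 1 + X 0 + X 0 ^ 3 * X 1 := by
  rw [show (1 - X 0 ^ 2 - X 0 ^ 2 * X 1 - X 0 ^ 4 * X 1 : MvPowerSeries (Fin 2) ℚ) =
      1 - X 0 ^ 2 * X 1 ^ 0 - X 0 ^ 2 * X 1 ^ 1 - X 0 ^ 4 * X 1 ^ 1 by ring,
    show (1 + X 0 + X 0 ^ 3 * X 1 : MvPowerSeries (Fin 2) ℚ) =
      X 0 ^ 0 * X 1 ^ 0 + X 0 ^ 1 * X 1 ^ 0 + X 0 ^ 3 * X 1 ^ 1 by ring]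
  ext m
  simp only [sub_mul, one_mul, map_sub, map_add, coeff_X_pow_mul_X_pow_mul, coeff_X_pow_mul_X_pow,
    coeff_goodSeries, tsub_apply, Finsupp.add_apply, single_apply, zero_ne_one, one_ne_zero,
    if_true, if_false, add_zero, zero_add, tsub_zero]
  generalize m 0 = n, m 1 = k
  rcases k with _ | k
  · rcases n with _ | _ | n <;> simp [goodCount_zero]
  rcases n with _ | _ | n
  · simp [goodCount_succ_of_le_one]
  · simp [goodCount_succ_of_le_one]
  rw [goodCount_succ_add_two]
  rcases n with _ | _ | n
  · simp [card_filter_head_eq_two_two]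
  · simp [card_filter_head_eq_two_three]
  · simp [card_filter_head_eq_two_add_four]

theorem eq_goodSeries_of_denominator_mul_eq {G : MvPowerSeries (Fin 2) ℚ}
    (hG : (1 - X 0 ^ 2 - X 0 ^ 2 * X 1 - X 0 ^ 4 * X 1) * G = 1 + X 0 + X 0 ^ 3 * X 1) :
    G = goodSeries := by
  have hunit : IsUnit (1 - X 0 ^ 2 - X 0 ^ 2 * X 1 - X 0 ^ 4 * X 1 : MvPowerSeries (Fin 2) ℚ) := by
    simp [isUnit_iff_constantCoeff]
  exact hunit.mul_left_cancel (hG.trans denominator_mul_goodSeries.symm)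

end Series

theorem stmt17_general (k : ℕ)
    (n : ℕ)
    (c : ℕ)
    (hc : c = ((Finset.univ : Finset (Fin k → Fin n)).filter (GoodTuple k n)).card)
    (X Y : MvPowerSeries (Fin 2) ℚ) (hX : X = MvPowerSeries.X 0) (hY : Y = MvPowerSeries.X 1)
    (G : MvPowerSeries (Fin 2) ℚ)
    (hG : (1 - X ^ 2 - X ^ 2 * Y - X ^ 4 * Y) * G = 1 + X + X ^ 3 * Y) :
    (c : ℚ) = MvPowerSeries.coeff (Finsupp.single 0 n + Finsupp.single 1 k) G := by
  subst hc hX hY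
  rw [eq_goodSeries_of_denominator_mul_eq hG, coeff_goodSeries]
  simp [card_filter_goodTuple]

theorem stmt17 (d : ℕ) (hodd : Odd d) (k : ℕ) (hk : k = (d + 1) / 2)
    (n : ℕ) (hn : d + 1 ≤ n)
    (c : ℕ)
    (hc : c = ((Finset.univ : Finset (Fin k → Fin n)).filter (GoodTuple k n)).card)
    (X Y : MvPowerSeries (Fin 2) ℚ) (hX : X = MvPowerSeries.X 0) (hY : Y = MvPowerSeries.X 1)
    (G : MvPowerSeries (Fin 2) ℚ)
    (hG : (1 - X ^ 2 - X ^ 2 * Y - X ^ 4 * Y) * G = 1 + X + X ^ 3 * Y) :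
    (c : ℚ) = MvPowerSeries.coeff (Finsupp.single 0 n + Finsupp.single 1 k) G :=
  stmt17_general k n c hc X Y hX hY G hG
end
end
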